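/- arXiv:math/0602100 — 7 statements merged into one kernel-verified Lean document; each statement's English description precedes it below -/
import Mathlib

section
/- The generating function f(z) = ∑_{n≥1} e_n z^n, where e_n is the number of words of length n over the alphabet {λ_1,…,λ_M, ρ_1,…,ρ_M, 1_1,…,1_N} that reduce to the identity in the Motzkin monoid M(M,N) and are of the form λ_i v ρ_i with red(v) = 1, satisfies the quadratic equation f(z)^2 + (N z − 1) f(z) + M z^2 = 0 as formal power series. -/
open PowerSeries

namespace MotzkinPaper

/-- The alphabet of the Motzkin shift: `M` left brackets `λ_i`, `M` right brackets `ρ_i`,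
`N` neutral symbols `1_j`. -/
inductive Letter (M N : ℕ) : Type where
  | lam (i : Fin M)
  | rho (i : Fin M)
  | neu (j : Fin N)
  deriving DecidableEq

/-- Elements of the Motzkin monoid `M(M,N)`: `none` is the zero element; a nonzero
element is (the reduced word) `ρ_{r₁}⋯ρ_{rₖ} λ_{l₁}⋯λ_{lₘ}`, recorded as the pair
`(r, l)` with `l` stored in reverse order.  `some ([], [])` is the identity `1`. -/
abbrev El (M : ℕ) : Type := Option (List (Fin M) × List (Fin M))

/-- The identity of the Motzkin monoid. -/
def one (M : ℕ) : El M := some ([], [])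

/-- Multiply a (reduced, nonzero-or-zero) monoid element by a generator, implementing
the relations `λ_i ρ_i = 1`, `λ_i ρ_j = 0 (i ≠ j)`, `1_j` neutral. -/
def step (M N : ℕ) : El M → Letter M N → El M
  | none, _ => none
  | some (r, l), .neu _ => some (r, l)
  | some (r, l), .lam i => some (r, i :: l)
  | some (r, l), .rho j =>
      match l with
      | [] => some (r ++ [j], [])
      | i :: t => if i = j then some (r, t) else none

/-- `red w` is the image of the word `w` in the Motzkin monoid `M(M,N)`. -/
def red (M N : ℕ) (w : List (Letter M N)) : El M := w.foldl (step M N) (one M)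

/-- The Motzkin code `E`: words of the form `λ_i v ρ_i` with `red v = 1`. -/
def codeE (M N : ℕ) (w : List (Letter M N)) : Prop :=
  ∃ (i : Fin M) (v : List (Letter M N)),
    w = Letter.lam i :: (v ++ [Letter.rho i]) ∧ red M N v = one M

/-- `e M N n`: the number of words of length `n` in the Motzkin code `E`. -/
noncomputable def e (M N n : ℕ) : ℕ :=
  Nat.card {w : Fin n → Letter M N // codeE M N (List.ofFn w)}

/-- The generating function `f(E,z) = ∑ₙ e_n zⁿ` of the Motzkin code. -/
noncomputable def fE (M N : ℕ) : PowerSeries ℚ := PowerSeries.mk fun n => (e M N n : ℚ)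

end MotzkinPaper

namespace MotzkinPaper
section Aux
variable {M N : ℕ}

/-- Run a word from an arbitrary state. -/
def run (M N : ℕ) (s : El M) (w : List (Letter M N)) : El M := w.foldl (step M N) s

lemma red_eq_run (w : List (Letter M N)) : red M N w = run M N (one M) w := rfl

@[simp] lemma run_nil (s : El M) : run M N s [] = s := rfl

lemma run_cons (s : El M) (a : Letter M N) (w : List (Letter M N)) :
    run M N s (a :: w) = run M N (step M N s a) w := rfl

lemma run_append (s : El M) (u v : List (Letter M N)) :
    run M N s (u ++ v) = run M N (run M N s u) v := List.foldl_append ..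

@[simp] lemma run_none (w : List (Letter M N)) : run M N none w = none := by
  induction w with
  | nil => rfl
  | cons a t ih => rw [run_cons]; exact ih

lemma run_r_mono (w : List (Letter M N)) : ∀ r l r' l',
    run M N (some (r, l)) w = some (r', l') → r <+: r' := by
  induction w with
  | nil => intro r l r' l' h; injection h with h; injection h with h1 h2; exact h1 ▸ List.prefix_refl r
  | cons a t ih =>
    intro r l r' l' h
    rw [run_cons] at h
    match a with
    | .neu j => exact ih r l r' l' h
    | .lam i => exact ih r (i :: l) r' l' h
    | .rho j =>
      match l with
      | [] =>
        have := ih (r ++ [j]) [] r' l' h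
        exact (List.prefix_append r [j]).trans this
      | i :: s =>
        by_cases hij : i = j
        · simp only [step, hij, if_pos rfl] at h
          exact ih r s r' l' h
        · simp only [step, if_neg hij] at h
          rw [run_none] at h; exact absurd h (by simp)

/-- "Bad" states: zero, or nonempty `ρ`-part; these can never come back to `1`. -/
def Bad (s : El M) : Prop := s = none ∨ ∃ r l, s = some (r, l) ∧ r ≠ []

lemma bad_run (w : List (Letter M N)) {s : El M} (hs : Bad s) : Bad (run M N s w) := by
  rcases hs with h | ⟨r, l, rfl, hr⟩
  · subst h; rw [run_none]; exact Or.inl rfl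
  · cases h : run M N (some (r, l)) w with
    | none => exact Or.inl rfl
    | some p =>
      obtain ⟨r', l'⟩ := p
      refine Or.inr ⟨r', l', rfl, ?_⟩
      have := run_r_mono w r l r' l' h
      intro h0; subst h0; exact hr (List.prefix_nil.mp this)

lemma bad_ne_one {s : El M} (hs : Bad s) : s ≠ one M := by
  rcases hs with rfl | ⟨r, l, rfl, hr⟩
  · simp [one]
  · intro h
    rw [one] at h
    injection h with h
    injection h with h1 h2
    exact hr h1

end Aux
section Aux2
variable {M N : ℕ}

/-- Lifting: a run that starts and ends with empty `ρ`-part can be run on top of any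
additional stack content `b`. -/
lemma run_lift (w : List (Letter M N)) : ∀ l l' b,
    run M N (some ([], l)) w = some ([], l') →
    run M N (some ([], l ++ b)) w = some ([], l' ++ b) := by
  induction w with
  | nil =>
    intro l l' b h
    rw [run_nil] at h ⊢
    injection h with h; injection h with h1 h2
    rw [h2]
  | cons a t ih =>
    intro l l' b h
    rw [run_cons] at h ⊢
    match a with
    | .neu j => exact ih l l' b h
    | .lam i => exact ih (i :: l) l' b h
    | .rho j =>
      match l with
      | [] =>
        exfalso
        simp only [step] at h
        have := run_r_mono t [j] [] [] l' h
        simp at this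
      | i :: s =>
        by_cases hij : i = j
        · simp only [step, List.cons_append, hij, if_pos rfl] at h ⊢
          exact ih s l' b h
        · simp only [step, List.cons_append, if_neg hij] at h
          rw [run_none] at h; exact absurd h (by simp)

/-- If a run consumes the bottom element of the stack, then the run without that
bottom element ends badly. -/
lemma run_pop_bad (w : List (Letter M N)) : ∀ l (i : Fin M),
    run M N (some ([], l ++ [i])) w = some ([], []) →
    Bad (run M N (some ([], l)) w) := by
  induction w with
  | nil =>
    intro l i h
    rw [run_nil] at h
    injection h with h; injection h with h1 h2
    exact absurd h2 (by simp)
  | cons a t ih =>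
    intro l i h
    rw [run_cons] at h ⊢
    match a with
    | .neu j => exact ih l i h
    | .lam k => exact ih (k :: l) i h
    | .rho k =>
      match l with
      | [] =>
        by_cases hik : i = k
        · have : step M N (some ([], ([] : List (Fin M)))) (.rho k) = some ([k], []) := by
            simp [step]
          rw [this]
          exact bad_run t (Or.inr ⟨[k], [], rfl, by simp⟩)
        · exfalso
          simp only [List.nil_append, step, if_neg hik] at h
          rw [run_none] at h; exact absurd h (by simp)
      | j :: s =>
        by_cases hjk : j = k
        · simp only [step, List.cons_append, if_pos hjk, hjk] at h ⊢
          exact ih s i h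
        · simp only [step, List.cons_append, if_neg hjk] at h ⊢
          exfalso; rw [run_none] at h; exact absurd h (by simp)

/-- Popping: if a run never returns to the empty stack, the bottom element is inert. -/
lemma run_pop (w : List (Letter M N)) : ∀ l (i : Fin M) r',
    run M N (some ([], l ++ [i])) w = some ([], r') →
    (∀ q, q <+: w → run M N (some ([], l ++ [i])) q ≠ some ([], [])) →
    ∃ l'', r' = l'' ++ [i] ∧ run M N (some ([], l)) w = some ([], l'') := by
  induction w with
  | nil =>
    intro l i r' h _
    rw [run_nil] at h
    injection h with h; injection h with h1 h2
    exact ⟨l, h2.symm, rfl⟩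
  | cons a t ih =>
    intro l i r' h h2
    have h2' : ∀ q, q <+: t → run M N (some ([], l ++ [i])) (a :: q) ≠ some ([], []) :=
      fun q hq => h2 (a :: q) (List.cons_prefix_cons.mpr ⟨rfl, hq⟩)
    rw [run_cons] at h ⊢
    match a with
    | .neu j => exact ih l i r' h (fun q hq => h2' q hq)
    | .lam k => exact ih (k :: l) i r' h (fun q hq => h2' q hq)
    | .rho k =>
      match l with
      | [] =>
        by_cases hik : i = k
        · exfalso
          exact h2 [Letter.rho k] ⟨t, rfl⟩ (by simp [run_cons, step, hik])
        · exfalso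
          simp only [List.nil_append, step, if_neg hik] at h
          rw [run_none] at h; exact absurd h (by simp)
      | j :: s =>
        by_cases hjk : j = k
        · simp only [step, List.cons_append, if_pos hjk, hjk] at h h2' ⊢
          refine ih s i r' h (fun q hq => ?_)
          have := h2' q hq
          rw [run_cons] at this
          simpa [step] using this
        · simp only [step, List.cons_append, if_neg hjk] at h ⊢
          exfalso; rw [run_none] at h; exact absurd h (by simp)

/-- Code words reduce to the identity. -/
lemma codeE_red_one {w : List (Letter M N)} (hw : codeE M N w) : red M N w = one M := by
  obtain ⟨i, v, rfl, hv⟩ := hw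
  rw [red_eq_run] at hv ⊢
  have hv' : run M N (some ([], [i])) v = some ([], [i]) := by
    have := run_lift v [] [] [i] hv
    simpa using this
  rw [run_cons, run_append, ]
  have hstep : step M N (one M) (Letter.lam i) = some ([], [i]) := rfl
  rw [hstep, hv']
  simp [run_cons, step, one]

end Aux2
section Aux3
variable {M N : ℕ}

lemma red_neu_cons (j : Fin N) (v : List (Letter M N)) :
    red M N (Letter.neu j :: v) = red M N v := rfl

lemma red_append_ne_one {q : List (Letter M N)} (i : Fin M)
    (h : run M N (some ([], [i])) q = some ([], [])) (rest : List (Letter M N)) :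
    red M N (q ++ rest) ≠ one M := by
  have hbad : Bad (red M N q) := by
    have := run_pop_bad q [] i (by simpa using h)
    simpa [red_eq_run, one] using this
  rw [red_eq_run, run_append, ← red_eq_run]
  exact bad_ne_one (bad_run rest hbad)

lemma red_lam_cons (i : Fin M) (v : List (Letter M N)) :
    red M N (Letter.lam i :: v) = run M N (some ([], [i])) v := rfl

/-- Every nonempty word reducing to the identity starts with a neutral letter or
with a code word. -/
lemma exists_decomp {w : List (Letter M N)} (hne : w ≠ []) (hw : red M N w = one M) :
    (∃ j v, w = Letter.neu j :: v ∧ red M N v = one M) ∨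
    (∃ u v, w = u ++ v ∧ codeE M N u ∧ red M N v = one M) := by
  classical
  match w, hne with
  | .neu j :: t, _ =>
    left
    exact ⟨j, t, rfl, by rwa [red_neu_cons] at hw⟩
  | .rho j :: t, _ =>
    exfalso
    have : red M N (Letter.rho j :: t) = run M N (some ([j], [])) t := rfl
    rw [this] at hw
    exact bad_ne_one (bad_run t (Or.inr ⟨[j], [], rfl, by simp⟩)) hw
  | .lam i :: t, _ =>
    right
    set w : List (Letter M N) := Letter.lam i :: t with hwdef
    have hP : ∃ j, 0 < j ∧ red M N (w.take j) = one M :=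
      ⟨w.length, by simp [hwdef], by simpa using hw⟩
    set n₀ := Nat.find hP with hn₀def
    obtain ⟨hpos, hred⟩ := Nat.find_spec hP
    have hmin : ∀ j, j < n₀ → ¬(0 < j ∧ red M N (w.take j) = one M) :=
      fun j hj => Nat.find_min hP hj
    have hle : n₀ ≤ w.length := Nat.find_le ⟨by simp [hwdef], by simpa using hw⟩
    rw [← hn₀def] at hpos hred
    have hwlen : w.length = t.length + 1 := by rw [hwdef]; simp
    refine ⟨w.take n₀, w.drop n₀, (List.take_append_drop n₀ w).symm, ?_, ?_⟩
    · -- the minimal prefix is a code word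
      have hu : w.take n₀ = Letter.lam i :: t.take (n₀ - 1) := by
        obtain ⟨k, hk⟩ : ∃ k, n₀ = k + 1 := ⟨n₀ - 1, by omega⟩
        rw [hwdef, hk]
        simp
      set m' := t.take (n₀ - 1) with hm'def
      have hm'len : m'.length = n₀ - 1 := by
        have hlt : n₀ - 1 ≤ t.length := by omega
        rw [hm'def, List.length_take]
        exact min_eq_left hlt
      rcases eq_or_ne m' [] with hm | hm
      · exfalso
        rw [hu, hm] at hred
        have : red M N [Letter.lam i] = some ([], [i]) := rfl
        rw [this] at hred
        simp [one] at hred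
      · obtain ⟨m, a, hsplit⟩ : ∃ m a, m' = m ++ [a] :=
          ⟨m'.dropLast, m'.getLast hm, (List.dropLast_append_getLast hm).symm⟩
      
        have hmlen : m.length = n₀ - 2 := by
          have := hm'len
          rw [hsplit, List.length_append, List.length_singleton] at this
          have h2 : 1 ≤ n₀ - 1 := by
            rw [← hm'len, hsplit]; simp
          omega
        have hn₀2 : 2 ≤ n₀ := by
          have h2 : 1 ≤ n₀ - 1 := by rw [← hm'len, hsplit]; simp
          omega
        have hmpre : m <+: t := by
          calc m <+: m' := hsplit ▸ ⟨[a], rfl⟩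
          _ <+: t := hm'def ▸ List.take_prefix _ _
        -- analyze the last letter
        have hrun : step M N (run M N (some ([], [i])) m) a = one M := by
          rw [hu, hsplit, red_lam_cons] at hred
          rw [← hred, run_append]
          rfl
        -- minimality gives: no internal prefix of m returns to one
        have hint : ∀ q, q <+: m → run M N (some ([], [i])) q ≠ some ([], []) := by
          intro q hq hcontra
          have hqt : q <+: t := hq.trans hmpre
          have hpre : Letter.lam i :: q <+: w := by
            rw [hwdef]; exact List.cons_prefix_cons.mpr ⟨rfl, hqt⟩
          have htake : Letter.lam i :: q = w.take (q.length + 1) := by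
            have := List.prefix_iff_eq_take.mp hpre
            simpa using this
          refine hmin (q.length + 1) ?_ ⟨Nat.succ_pos _, ?_⟩
          · have := hq.length_le; omega
          · rw [← htake, red_lam_cons]; exact hcontra
        cases hs : run M N (some ([], [i])) m with
        | none => rw [hs] at hrun; simp [step, one] at hrun
        | some p =>
          obtain ⟨r, l⟩ := p
          rw [hs] at hrun
          match a, hrun, hsplit with
          | .neu j, hrun, hsplit =>
            exfalso
            have hone : run M N (some ([], [i])) m = one M := by
              rw [hs]; simpa [step] using hrun
            exact hint m (List.prefix_refl m) (by rw [hone]; rfl)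
          | .lam k, hrun, hsplit =>
            exfalso
            simp [step, one] at hrun
          | .rho k, hrun, hsplit =>
            cases l with
            | nil =>
              exfalso
              simp [step, one] at hrun
            | cons j s' =>
              by_cases hjk : j = k
              · have hrl : r = [] ∧ s' = [] := by
                  simp only [step, if_pos hjk, one, Option.some.injEq, Prod.mk.injEq] at hrun
                  exact hrun
                obtain ⟨rfl, rfl⟩ := hrl
                subst hjk
                obtain ⟨l'', hl'', hmrun⟩ :=
                  run_pop m [] i [j] (by simpa using hs)
                    (by intro q hq; simpa using hint q hq)
                have hl''nil : l'' = [] := by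
                  cases l'' with
                  | nil => rfl
                  | cons x xs => simp at hl''
                subst hl''nil
                have hji : j = i := by simpa using hl''
                refine ⟨i, m, ?_, ?_⟩
                · rw [hu, hsplit, hji]
                · rw [red_eq_run]; simpa [one] using hmrun
              · exfalso
                simp [step, if_neg hjk, one] at hrun
    · -- the rest reduces to one
      have : red M N w = run M N (red M N (w.take n₀)) (w.drop n₀) := by
        conv_lhs => rw [← List.take_append_drop n₀ w]
        rw [red_eq_run, run_append, ← red_eq_run]
      rw [this, hred] at hw
      rw [red_eq_run]
      exact hw

end Aux3
section Aux4
variable {M N : ℕ}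

/-- A code word is never a proper prefix of another code word. -/
lemma code_prefix {u₁ u₂ : List (Letter M N)} (h1 : codeE M N u₁) (h2 : codeE M N u₂)
    (hp : u₁ <+: u₂) : u₁ = u₂ := by
  rcases eq_or_lt_of_le hp.length_le with heq | hlt
  · exact hp.eq_of_length heq
  · exfalso
    obtain ⟨i1, m1, hu1, hm1⟩ := h1
    obtain ⟨i2, m2, hu2, hm2⟩ := h2
    rw [hu1, hu2] at hp hlt
    obtain ⟨hi, hq⟩ := List.cons_prefix_cons.mp hp
    have hii : i1 = i2 := by injection hi
    subst hii
    have hlq : (m1 ++ [Letter.rho i1]).length ≤ m2.length := by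
      simp at hlt ⊢
      omega
    have hqm : (m1 ++ [Letter.rho i1]) <+: m2 := by
      have h := List.prefix_iff_eq_take.mp hq
      rw [List.take_append_of_le_length hlq] at h
      exact h ▸ List.take_prefix _ _
    obtain ⟨rest, hrest⟩ := hqm
    have hrun : run M N (some ([], [i1])) (m1 ++ [Letter.rho i1]) = some ([], []) := by
      have h := codeE_red_one (⟨i1, m1, rfl, hm1⟩ : codeE M N _)
      rw [red_lam_cons] at h
      exact h
    rw [← hrest] at hm2
    exact red_append_ne_one i1 hrun rest hm2

/-- Uniqueness of the code-block decomposition. -/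
lemma decomp_unique {u₁ u₂ v₁ v₂ : List (Letter M N)} (h1 : codeE M N u₁)
    (h2 : codeE M N u₂) (h : u₁ ++ v₁ = u₂ ++ v₂) : u₁ = u₂ ∧ v₁ = v₂ := by
  have hp1 : u₁ <+: u₂ ++ v₂ := h ▸ ⟨v₁, rfl⟩
  have hp2 : u₂ <+: u₂ ++ v₂ := ⟨v₂, rfl⟩
  have hu : u₁ = u₂ := by
    rcases List.prefix_or_prefix_of_prefix hp1 hp2 with hc | hc
    · exact code_prefix h1 h2 hc
    · exact (code_prefix h2 h1 hc).symm
  subst hu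
  exact ⟨rfl, List.append_cancel_left h⟩

/-- Code words start with a `λ`. -/
lemma codeE_head {w : List (Letter M N)} (hw : codeE M N w) :
    ∃ i v, w = Letter.lam i :: v := by
  obtain ⟨i, v, rfl, -⟩ := hw
  exact ⟨i, _, rfl⟩

lemma codeE_length {w : List (Letter M N)} (hw : codeE M N w) : 2 ≤ w.length := by
  obtain ⟨i, v, rfl, -⟩ := hw
  simp

end Aux4
section Aux5
variable (M N : ℕ)

def letterEquiv : Letter M N ≃ (Fin M ⊕ Fin M ⊕ Fin N) where
  toFun x := match x with
    | .lam i => .inl i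
    | .rho i => .inr (.inl i)
    | .neu j => .inr (.inr j)
  invFun x := match x with
    | .inl i => .lam i
    | .inr (.inl i) => .rho i
    | .inr (.inr j) => .neu j
  left_inv := by rintro (i | i | j) <;> rfl
  right_inv := by rintro (i | i | j) <;> rfl

instance : Finite (Letter M N) := Finite.of_equiv _ (letterEquiv M N).symm

instance finite_len_subtype (P : List (Letter M N) → Prop) (n : ℕ) :
    Finite {w : List (Letter M N) // w.length = n ∧ P w} := by
  have hf : {l : List (Letter M N) | l.length = n}.Finite := List.finite_length_eq _ n
  have : Finite {l : List (Letter M N) | l.length = n} := hf.to_subtype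
  exact Finite.of_injective
    (fun w => (⟨w.1, w.2.1⟩ : {l : List (Letter M N) | l.length = n}))
    (fun a b h => Subtype.ext (Subtype.mk_eq_mk.mp h))

/-- Number of words of length `n` reducing to the identity. -/
noncomputable def bb (n : ℕ) : ℕ :=
  Nat.card {w : List (Letter M N) // w.length = n ∧ red M N w = one M}

/-- Number of code words of length `n`. -/
noncomputable def cc (n : ℕ) : ℕ :=
  Nat.card {w : List (Letter M N) // w.length = n ∧ codeE M N w}

lemma e_eq_cc (n : ℕ) : e M N n = cc M N n := by
  refine Nat.card_eq_of_bijective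
    (fun w => (⟨List.ofFn w.1, by simp, w.2⟩ :
      {w : List (Letter M N) // w.length = n ∧ codeE M N w})) ⟨?_, ?_⟩
  · intro a b h
    exact Subtype.ext (List.ofFn_injective (congrArg Subtype.val h))
  · rintro ⟨w, hlen, hc⟩
    subst hlen
    exact ⟨⟨w.get, by rw [List.ofFn_get]; exact hc⟩,
      Subtype.ext (List.ofFn_get w)⟩

lemma cc_eq_zero {n : ℕ} (hn : n ≤ 1) : cc M N n = 0 := by
  have : IsEmpty {w : List (Letter M N) // w.length = n ∧ codeE M N w} := by
    constructor
    rintro ⟨w, hlen, hc⟩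
    have := codeE_length hc
    omega
  exact Nat.card_of_isEmpty

lemma cc_succ_succ (n : ℕ) : cc M N (n + 2) = M * bb M N n := by
  have h := Nat.card_congr (Equiv.ofBijective
    (f := fun p : Fin M × {v : List (Letter M N) // v.length = n ∧ red M N v = one M} =>
      (⟨Letter.lam p.1 :: (p.2.1 ++ [Letter.rho p.1]), by simp [p.2.2.1],
        ⟨p.1, p.2.1, rfl, p.2.2.2⟩⟩ :
        {w : List (Letter M N) // w.length = n + 2 ∧ codeE M N w})) ⟨?_, ?_⟩)
  · rw [cc, ← h, Nat.card_prod, Nat.card_eq_fintype_card, Fintype.card_fin, bb]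
  · rintro ⟨i1, v1⟩ ⟨i2, v2⟩ h
    have h' := congrArg Subtype.val h
    simp only at h'
    obtain ⟨hi, hv⟩ := List.cons_eq_cons.mp h'
    have hii : i1 = i2 := by injection hi
    subst hii
    have : v1.1 = v2.1 := List.append_cancel_right hv
    exact Prod.ext rfl (Subtype.ext this)
  · rintro ⟨w, hlen, i, v, hw, hv⟩
    have hvlen : v.length = n := by
      rw [hw] at hlen; simp at hlen; omega
    exact ⟨⟨i, ⟨v, hvlen, hv⟩⟩, Subtype.ext hw.symm⟩

lemma bb_zero : bb M N 0 = 1 := by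
  have h1 : Nonempty {w : List (Letter M N) // w.length = 0 ∧ red M N w = one M} :=
    ⟨⟨[], rfl, rfl⟩⟩
  have h2 : Subsingleton {w : List (Letter M N) // w.length = 0 ∧ red M N w = one M} := by
    constructor
    rintro ⟨w1, h1', -⟩ ⟨w2, h2', -⟩
    apply Subtype.ext
    show w1 = w2
    rw [List.length_eq_zero_iff.mp h1', List.length_eq_zero_iff.mp h2']
  exact Nat.card_unique

end Aux5
section Aux6
variable (M N : ℕ)

lemma red_append_code {u v : List (Letter M N)} (hu : codeE M N u)
    (hv : red M N v = one M) : red M N (u ++ v) = one M := by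
  have h : red M N (u ++ v) = run M N (red M N u) v := by
    rw [red_eq_run, run_append, ← red_eq_run]
  rw [h, codeE_red_one hu, ← red_eq_run, hv]

lemma card_sigma_fin {m : ℕ} (T : Fin m → Type*) [∀ k, Finite (T k)] :
    Nat.card (Σ k, T k) = ∑ k : Fin m, Nat.card (T k) := by
  haveI : ∀ k, Fintype (T k) := fun k => Fintype.ofFinite _
  rw [Nat.card_eq_fintype_card, Fintype.card_sigma]
  exact Finset.sum_congr rfl fun k _ => (Nat.card_eq_fintype_card).symm

lemma bb_succ (n : ℕ) :
    bb M N (n + 1) = N * bb M N n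
      + ∑ k ∈ Finset.range (n + 2), cc M N k * bb M N (n + 1 - k) := by
  classical
  let g : (Fin N × {v : List (Letter M N) // v.length = n ∧ red M N v = one M}) ⊕
      (Σ k : Fin (n + 2), {u : List (Letter M N) // u.length = k.1 ∧ codeE M N u} ×
        {v : List (Letter M N) // v.length = n + 1 - k.1 ∧ red M N v = one M}) →
      {w : List (Letter M N) // w.length = n + 1 ∧ red M N w = one M} := fun x =>
    match x with
    | .inl (j, v) => ⟨Letter.neu j :: v.1, by simp [v.2.1], by
        rw [red_neu_cons]; exact v.2.2⟩
    | .inr ⟨k, u, v⟩ => ⟨u.1 ++ v.1, by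
        have h1 := u.2.1; have h2 := v.2.1; have h3 := k.2
        simp only [List.length_append, h1, h2]; omega,
        red_append_code M N u.2.2 v.2.2⟩
  have hinj : Function.Injective g := by
    rintro (⟨j1, v1⟩ | ⟨k1, u1, v1⟩) (⟨j2, v2⟩ | ⟨k2, u2, v2⟩) h <;>
      have h' := congrArg Subtype.val h
    all_goals simp only [g] at h'
    · obtain ⟨hj, hv⟩ := List.cons_eq_cons.mp h'
      have : j1 = j2 := by injection hj
      subst this
      exact congrArg Sum.inl (Prod.ext rfl (Subtype.ext hv))
    · exfalso
      obtain ⟨i, rest, hrest⟩ := codeE_head u2.2.2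
      rw [hrest] at h'
      simp at h'
    · exfalso
      obtain ⟨i, rest, hrest⟩ := codeE_head u1.2.2
      rw [hrest] at h'
      simp at h'
    · obtain ⟨hu, hv⟩ := decomp_unique u1.2.2 u2.2.2 h'
      have hk : k1 = k2 := Fin.ext (by rw [← u1.2.1, ← u2.2.1, hu])
      subst hk
      exact congrArg Sum.inr
        (congrArg (Sigma.mk k1) (Prod.ext (Subtype.ext hu) (Subtype.ext hv)))
  have hsurj : Function.Surjective g := by
    rintro ⟨w, hlen, hone⟩
    have hne : w ≠ [] := by
      intro h; rw [h] at hlen; simp at hlen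
    rcases exists_decomp hne hone with ⟨j, v, rfl, hv⟩ | ⟨u, v, rfl, hu, hv⟩
    · exact ⟨.inl (j, ⟨v, by simpa using hlen, hv⟩), Subtype.ext rfl⟩
    · have hlen' : u.length + v.length = n + 1 := by simpa using hlen
      refine ⟨.inr ⟨⟨u.length, by omega⟩, ⟨u, rfl, hu⟩, ⟨v, by show v.length = n + 1 - u.length; omega, hv⟩⟩,
        Subtype.ext rfl⟩
  have hcard := Nat.card_congr (Equiv.ofBijective g ⟨hinj, hsurj⟩)
  rw [bb, ← hcard, Nat.card_sum, Nat.card_prod, Nat.card_eq_fintype_card (α := Fin N),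
    Fintype.card_fin, card_sigma_fin]
  congr 1
  rw [← Fin.sum_univ_eq_sum_range (fun j => cc M N j * bb M N (n + 1 - j)) (n + 2)]
  exact Finset.sum_congr rfl fun k _ => Nat.card_prod _ _

end Aux6
section Aux7
variable (M N : ℕ)

/-- The generating function of balanced words. -/
noncomputable def gB : PowerSeries ℚ := PowerSeries.mk fun n => (bb M N n : ℚ)

lemma fE_eq : fE M N = (M : PowerSeries ℚ) * gB M N * PowerSeries.X ^ 2 := by
  ext n
  rw [fE, coeff_mk, ← map_natCast (C (R := ℚ)) M, mul_assoc, coeff_C_mul, coeff_mul_X_pow']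
  rcases n with _ | _ | n
  · simp [e_eq_cc, cc_eq_zero]
  · simp [e_eq_cc, cc_eq_zero]
  · have h2 : 2 ≤ n + 2 := by omega
    rw [if_pos h2, e_eq_cc, cc_succ_succ]
    simp [gB, coeff_mk]

lemma gB_eq : gB M N = 1 + (N : PowerSeries ℚ) * PowerSeries.X * gB M N
    + fE M N * gB M N := by
  ext n
  rw [map_add, map_add, coeff_one]
  have hNX : (N : PowerSeries ℚ) * PowerSeries.X * gB M N
      = C (R := ℚ) (N : ℚ) * (gB M N * PowerSeries.X ^ 1) := by
    rw [map_natCast (C (R := ℚ)) N]; ring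
  rw [hNX, coeff_C_mul, coeff_mul_X_pow', coeff_mul]
  rcases n with _ | n
  · simp [gB, coeff_mk, bb_zero, e_eq_cc, cc_eq_zero, fE]
  · rw [Finset.Nat.sum_antidiagonal_eq_sum_range_succ_mk]
    simp only [gB, coeff_mk, fE, if_pos (Nat.one_le_iff_ne_zero.mpr (Nat.succ_ne_zero n)),
      Nat.succ_sub_one, if_neg (Nat.succ_ne_zero n)]
    have hrec := bb_succ M N n
    have : ((bb M N (n + 1) : ℚ)) = (N : ℚ) * (bb M N n : ℚ)
        + ∑ k ∈ Finset.range (n + 2), (e M N k : ℚ) * (bb M N (n + 1 - k) : ℚ) := by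
      rw [hrec]
      push_cast [e_eq_cc]
      ring
    rw [this]
    ring
end Aux7
end MotzkinPaper

open MotzkinPaper in
/-- The generating function of the Motzkin code satisfies
`f(z)² + (Nz − 1)·f(z) + Mz² = 0` as formal power series. -/
theorem motzkin_code_generating_function_quadratic (M N : ℕ) (hM : 1 ≤ M) (hN : 1 ≤ N) :
    (fE M N) ^ 2 + ((N : PowerSeries ℚ) * PowerSeries.X - 1) * fE M N
      + (M : PowerSeries ℚ) * PowerSeries.X ^ 2 = 0 := by
  have hf := fE_eq M N
  have hg := gB_eq M N
  linear_combination (fE M N + (N : PowerSeries ℚ) * PowerSeries.X - 1) * hf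
    - ((M : PowerSeries ℚ) * PowerSeries.X ^ 2) * hg
end

section
/- For N = 0 (the Dyck case), the number of words of length 2k in the Dyck code over M matching bracket pairs (words λ_i v ρ_i reducing to 1) equals C_{k-1} · M^k, where C_{k-1} is the (k−1)-st Catalan number, and there are no odd-length code words. -/
open PowerSeries

namespace DyckProof
open MotzkinPaper

variable {M : ℕ}

def Good (M : ℕ) (v : List (Letter M 0)) : Prop := red M 0 v = one M

lemma foldl_none (v : List (Letter M 0)) : v.foldl (step M 0) none = none := by
  induction v with
  | nil => rfl
  | cons a t ih => simpa [step] using ih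

lemma r_mono : ∀ (v : List (Letter M 0)) (r l r' l' : List (Fin M)),
    v.foldl (step M 0) (some (r, l)) = some (r', l') → r.length ≤ r'.length := by
  intro v
  induction v with
  | nil => intro r l r' l' h; simp at h; simp [h.1]
  | cons a t ih =>
    intro r l r' l' h
    match a with
    | .lam i =>
      simp only [List.foldl_cons, step] at h
      exact ih r (i :: l) r' l' h
    | .neu j => exact j.elim0
    | .rho j =>
      match l with
      | [] =>
        simp only [List.foldl_cons, step] at h
        have := ih (r ++ [j]) [] r' l' h
        simp at this; omega
      | i :: t' =>
        by_cases hij : i = j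
        · simp only [List.foldl_cons, step, if_pos hij] at h
          exact ih r t' r' l' h
        · simp only [List.foldl_cons, step, if_neg hij] at h
          rw [foldl_none] at h; exact absurd h (by simp)


lemma parity : ∀ (v : List (Letter M 0)) (r l r' l' : List (Fin M)),
    v.foldl (step M 0) (some (r, l)) = some (r', l') →
    (v.length + r.length + l.length) % 2 = (r'.length + l'.length) % 2 := by
  intro v
  induction v with
  | nil => intro r l r' l' h; simp at h; simp [h.1, h.2]
  | cons a t ih =>
    intro r l r' l' h
    match a with
    | .lam i =>
      simp only [List.foldl_cons, step] at h
      have := ih r (i :: l) r' l' h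
      simp at this ⊢; omega
    | .neu j => exact j.elim0
    | .rho j =>
      match l with
      | [] =>
        simp only [List.foldl_cons, step] at h
        have := ih (r ++ [j]) [] r' l' h
        simp at this ⊢; omega
      | i :: t' =>
        by_cases hij : i = j
        · simp only [List.foldl_cons, step, if_pos hij] at h
          have := ih r t' r' l' h
          simp at this ⊢; omega
        · simp only [List.foldl_cons, step, if_neg hij] at h
          rw [foldl_none] at h; exact absurd h (by simp)

lemma good_even {v : List (Letter M 0)} (h : Good M v) : Even v.length := by
  have := parity v [] [] [] [] h
  simp only [List.length_nil, Nat.add_zero] at this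
  exact Nat.even_iff.mpr (by omega)

lemma lift : ∀ (v : List (Letter M 0)) (l m l' : List (Fin M)),
    v.foldl (step M 0) (some ([], l)) = some ([], l') →
    v.foldl (step M 0) (some ([], l ++ m)) = some ([], l' ++ m) := by
  intro v
  induction v with
  | nil => intro l m l' h; simp at h ⊢; simp [h]
  | cons a t ih =>
    intro l m l' h
    match a with
    | .lam i =>
      simp only [List.foldl_cons, step] at h ⊢
      exact ih (i :: l) m l' h
    | .neu j => exact j.elim0
    | .rho j =>
      match l with
      | [] =>
        simp only [List.foldl_cons, step] at h
        have := r_mono t [j] [] [] l' h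
        simp at this
      | i :: t' =>
        by_cases hij : i = j
        · simp only [List.foldl_cons, List.cons_append, step, if_pos hij] at h ⊢
          exact ih t' m l' h
        · simp only [List.foldl_cons, step, if_neg hij] at h
          rw [foldl_none] at h; exact absurd h (by simp)

lemma good_nil : Good M [] := rfl

lemma good_cons {v w : List (Letter M 0)} (i : Fin M) (hv : Good M v) (hw : Good M w) :
    Good M (Letter.lam i :: (v ++ Letter.rho i :: w)) := by
  unfold Good red one at hv hw ⊢
  simp only [List.foldl_cons, List.foldl_append, step]
  have h1 : v.foldl (step M 0) (some ([], [i])) = some ([], [i]) := by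
    simpa using lift v [] [i] [] hv
  rw [h1]
  simpa [step] using hw

lemma head_lam {v : List (Letter M 0)} (h : Good M v) (hne : v ≠ []) :
    ∃ i t, v = Letter.lam i :: t := by
  match v, hne with
  | a :: t, _ =>
    match a with
    | .lam i => exact ⟨i, t, rfl⟩
    | .neu j => exact j.elim0
    | .rho j =>
      unfold Good red one at h
      simp only [List.foldl_cons, step] at h
      have := r_mono t [j] [] [] [] h
      simp at this

lemma not_good_ext {v : List (Letter M 0)} (hv : Good M v) (i : Fin M)
    (u : List (Letter M 0)) : ¬ Good M (v ++ Letter.rho i :: u) := by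
  intro h
  unfold Good red one at hv h
  rw [List.foldl_append, hv] at h
  simp only [List.foldl_cons, step] at h
  have := r_mono u [i] [] [] [] h
  simp at this

lemma unstack : ∀ (n : ℕ) (v : List (Letter M 0)), v.length ≤ n →
    ∀ (i : Fin M) (l : List (Fin M)),
    v.foldl (step M 0) (some ([], i :: l)) = some ([], []) →
    ∃ v1 v2, v = v1 ++ Letter.rho i :: v2 ∧ Good M v1 ∧
      v2.foldl (step M 0) (some ([], l)) = some ([], []) := by
  intro n
  induction n with
  | zero =>
    intro v hv i l h
    have hv0 : v = [] := List.eq_nil_of_length_eq_zero (by omega)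
    subst hv0; simp at h
  | succ n ih =>
    intro v hv i l h
    match v with
    | [] => simp at h
    | a :: t =>
      match a with
      | .neu j => exact j.elim0
      | .rho j =>
        by_cases hij : i = j
        · subst hij
          simp only [List.foldl_cons, step, if_pos rfl] at h
          exact ⟨[], t, rfl, good_nil, h⟩
        · simp only [List.foldl_cons, step, if_neg hij] at h
          rw [foldl_none] at h; exact absurd h (by simp)
      | .lam j =>
        simp only [List.foldl_cons, step] at h
        simp only [List.length_cons] at hv
        obtain ⟨w1, w2, ht, hw1, hw2⟩ := ih t (by omega) j (i :: l) h
        have hw2len : w2.length ≤ n := by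
          have := congrArg List.length ht
          simp at this; omega
        obtain ⟨u1, u2, hw2e, hu1, hu2⟩ := ih w2 hw2len i l hw2
        refine ⟨Letter.lam j :: (w1 ++ Letter.rho j :: u1), u2, ?_, ?_, hu2⟩
        · simp [ht, hw2e]
        · exact good_cons j hw1 hu1

lemma decomp {v : List (Letter M 0)} (h : Good M v) (hne : v ≠ []) :
    ∃ i v1 v2, v = Letter.lam i :: (v1 ++ Letter.rho i :: v2) ∧ Good M v1 ∧ Good M v2 := by
  obtain ⟨i, t, rfl⟩ := head_lam h hne
  unfold Good red one at h
  simp only [List.foldl_cons, step] at h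
  obtain ⟨v1, v2, ht, hv1, hv2⟩ := unstack t.length t le_rfl i [] h
  exact ⟨i, v1, v2, by rw [ht], hv1, hv2⟩


lemma not_lt_len {i i' : Fin M} {v1 v2 w1 w2 : List (Letter M 0)}
    (hv1 : Good M v1) (hw1 : Good M w1)
    (h : v1 ++ Letter.rho i :: v2 = w1 ++ Letter.rho i' :: w2) :
    ¬ v1.length < w1.length := by
  intro hlt
  have htake : (v1 ++ Letter.rho i :: v2).take (v1.length + 1) = v1 ++ [Letter.rho i] := by
    rw [List.take_append]; simp
  have htake2 : (w1 ++ Letter.rho i' :: w2).take (v1.length + 1) = w1.take (v1.length + 1) :=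
    List.take_append_of_le_length (by omega)
  have hpre : v1 ++ [Letter.rho i] <+: w1 := by
    rw [← htake, h, htake2]; exact List.take_prefix _ _
  obtain ⟨u, hu⟩ := hpre
  apply not_good_ext hv1 i u
  rw [← hu] at hw1
  simpa using hw1

lemma uniq {i i' : Fin M} {v1 v2 w1 w2 : List (Letter M 0)}
    (hv1 : Good M v1) (hw1 : Good M w1)
    (h : v1 ++ Letter.rho i :: v2 = w1 ++ Letter.rho i' :: w2) :
    v1 = w1 ∧ i = i' ∧ v2 = w2 := by
  have hlen : v1.length = w1.length := by
    rcases Nat.lt_trichotomy v1.length w1.length with hl | hl | hl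
    · exact absurd hl (not_lt_len hv1 hw1 h)
    · exact hl
    · exact absurd hl (not_lt_len hw1 hv1 h.symm)
  obtain ⟨h1, h2⟩ := List.append_inj h hlen
  simp only [List.cons.injEq, Letter.rho.injEq] at h2
  exact ⟨h1, h2.1, h2.2⟩


def letterEquiv (M N : ℕ) : Letter M N ≃ (Fin M ⊕ Fin M ⊕ Fin N) where
  toFun := fun x => match x with
    | .lam i => .inl i
    | .rho i => .inr (.inl i)
    | .neu j => .inr (.inr j)
  invFun := fun x => match x with
    | .inl i => .lam i
    | .inr (.inl i) => .rho i
    | .inr (.inr j) => .neu j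
  left_inv := by rintro (i | i | j) <;> rfl
  right_inv := by rintro (i | i | j) <;> rfl

instance (M N : ℕ) : Fintype (Letter M N) := Fintype.ofEquiv _ (letterEquiv M N).symm

instance (M : ℕ) : DecidablePred (Good M) := fun v => by unfold Good; infer_instance

def W (M n : ℕ) : Type := {v : List (Letter M 0) // v.length = n ∧ Good M v}

def wEquiv (M n : ℕ) : {v : List.Vector (Letter M 0) n // Good M v.toList} ≃ W M n where
  toFun := fun x => ⟨x.1.toList, x.1.2, x.2⟩
  invFun := fun y => ⟨⟨y.1, y.2.1⟩, y.2.2⟩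
  left_inv := fun x => rfl
  right_inv := fun y => rfl

noncomputable instance (M n : ℕ) : Fintype (W M n) := Fintype.ofEquiv _ (wEquiv M n)

noncomputable def cW (M n : ℕ) : ℕ := Fintype.card (W M n)

def g (M n : ℕ) : (Σ _a : Fin (n + 1), Fin M × W M _a × W M (n - _a)) → W M (n + 2) :=
  fun x =>
    ⟨Letter.lam x.2.1 :: (x.2.2.1.1 ++ Letter.rho x.2.1 :: x.2.2.2.1),
      by
        have h1 := x.2.2.1.2.1
        have h2 := x.2.2.2.2.1
        have h3 := x.1.2
        simp [h1, h2]
        omega,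
      good_cons x.2.1 x.2.2.1.2.2 x.2.2.2.2.2⟩

lemma g_bij (M n : ℕ) : Function.Bijective (g M n) := by
  constructor
  · rintro ⟨⟨a, ha⟩, i, ⟨v1, hv1len, hv1⟩, ⟨v2, hv2len, hv2⟩⟩
      ⟨⟨b, hb⟩, i', ⟨w1, hw1len, hw1⟩, ⟨w2, hw2len, hw2⟩⟩ h
    have h' : (Letter.lam i :: (v1 ++ Letter.rho i :: v2) : List (Letter M 0)) =
        Letter.lam i' :: (w1 ++ Letter.rho i' :: w2) := congrArg Subtype.val h
    clear h
    injection h' with hh htail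
    injection hh with hii
    obtain ⟨h1, h2, h3⟩ := uniq hv1 hw1 htail
    clear htail
    subst hii h1 h3
    have hab : a = b := hv1len.symm.trans hw1len
    subst hab
    rfl
  · rintro ⟨v, hlen, hgood⟩
    have hne : v ≠ [] := by intro h; subst h; simp at hlen
    obtain ⟨i, v1, v2, hv, hv1, hv2⟩ := decomp hgood hne
    have hl : v1.length + v2.length = n := by
      have := congrArg List.length hv
      simp [hlen] at this; omega
    refine ⟨⟨⟨v1.length, by omega⟩, i, ⟨v1, rfl, hv1⟩, ⟨v2, by show v2.length = n - v1.length; omega, hv2⟩⟩, ?_⟩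
    exact Subtype.ext hv.symm

lemma cW_rec (M n : ℕ) :
    cW M (n + 2) = ∑ a ∈ Finset.range (n + 1), M * cW M a * cW M (n - a) := by
  unfold cW
  rw [← Fintype.card_congr (Equiv.ofBijective _ (g_bij M n))]
  rw [Fintype.card_sigma]
  rw [← Fin.sum_univ_eq_sum_range]
  congr 1
  funext a
  simp [Fintype.card_prod, cW, Fintype.card_fin, Nat.mul_assoc]

lemma cW_zero (M : ℕ) : cW M 0 = 1 := by
  unfold cW
  rw [Fintype.card_eq_one_iff]
  refine ⟨⟨[], rfl, good_nil⟩, ?_⟩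
  rintro ⟨v, hv, hg⟩
  have : v = [] := List.eq_nil_of_length_eq_zero hv
  subst this; rfl

lemma cW_odd (M n : ℕ) (h : Odd n) : cW M n = 0 := by
  unfold cW
  rw [Fintype.card_eq_zero_iff]
  constructor
  rintro ⟨v, hv, hg⟩
  have := good_even hg
  rw [hv] at this
  exact (Nat.not_even_iff_odd.mpr h) this

lemma sum_even (f : ℕ → ℕ) (h : ∀ a, Odd a → f a = 0) : ∀ j : ℕ,
    ∑ a ∈ Finset.range (2 * j + 1), f a = ∑ b ∈ Finset.range (j + 1), f (2 * b) := by
  intro j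
  induction j with
  | zero => simp
  | succ j ih =>
    have h1 : 2 * (j + 1) + 1 = (2 * j + 1) + 1 + 1 := by ring
    have h2 : 2 * j + 1 + 1 = 2 * (j + 1) := by ring
    rw [h1, Finset.sum_range_succ, Finset.sum_range_succ, ih, h (2 * j + 1) ⟨j, by ring⟩,
      h2, Finset.sum_range_succ (fun b => f (2 * b)) (j + 1)]
    omega

lemma cW_even (M : ℕ) : ∀ j : ℕ, cW M (2 * j) = catalan j * M ^ j := by
  intro j
  induction j using Nat.strong_induction_on with
  | _ j ih =>
    match j with
    | 0 => simp [cW_zero]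
    | j + 1 =>
      have h1 : 2 * (j + 1) = 2 * j + 2 := by ring
      rw [h1, cW_rec, sum_even _ (fun a ha => by simp [cW_odd M a ha]) j]
      have hterm : ∀ b ∈ Finset.range (j + 1),
          M * cW M (2 * b) * cW M (2 * j - 2 * b) =
            catalan b * catalan (j - b) * M ^ (j + 1) := by
        intro b hb
        simp only [Finset.mem_range] at hb
        have hb' : b ≤ j := by omega
        have h2 : 2 * j - 2 * b = 2 * (j - b) := by omega
        rw [h2, ih b (by omega), ih (j - b) (by omega)]
        have h3 : M ^ b * M ^ (j - b) = M ^ j := by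
          rw [← pow_add]; congr 1; omega
        calc M * (catalan b * M ^ b) * (catalan (j - b) * M ^ (j - b))
            = catalan b * catalan (j - b) * (M * (M ^ b * M ^ (j - b))) := by ring
          _ = catalan b * catalan (j - b) * M ^ (j + 1) := by rw [h3, pow_succ]; ring
      rw [Finset.sum_congr rfl hterm, ← Finset.sum_mul]
      congr 1
      rw [catalan_succ, ← Fin.sum_univ_eq_sum_range]


lemma ofFn_get_cast {α : Type*} {n : ℕ} (l : List α) (h : l.length = n) :
    List.ofFn (fun k : Fin n => l.get (Fin.cast h.symm k)) = l := by
  subst h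
  simp

def listEquiv {α : Type*} (n : ℕ) (P : List α → Prop) :
    {w : Fin n → α // P (List.ofFn w)} ≃ {l : List α // l.length = n ∧ P l} where
  toFun := fun w => ⟨List.ofFn w.1, by simp, w.2⟩
  invFun := fun l => ⟨fun k => l.1.get (Fin.cast l.2.1.symm k), by
    rw [ofFn_get_cast l.1 l.2.1]; exact l.2.2⟩
  left_inv := by
    rintro ⟨w, hw⟩
    apply Subtype.ext
    funext k
    simp [List.get_ofFn]
  right_inv := by
    rintro ⟨l, hl, hp⟩
    exact Subtype.ext (ofFn_get_cast l hl)

def h (M n : ℕ) : Fin M × W M n → {l : List (Letter M 0) // l.length = n + 2 ∧ codeE M 0 l} :=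
  fun x =>
    ⟨Letter.lam x.1 :: (x.2.1 ++ [Letter.rho x.1]),
      by simp [x.2.2.1], ⟨x.1, x.2.1, rfl, x.2.2.2⟩⟩

lemma h_bij (M n : ℕ) : Function.Bijective (h M n) := by
  constructor
  · rintro ⟨i, v, hvlen, hv⟩ ⟨i', w, hwlen, hw⟩ heq
    have h' : (Letter.lam i :: (v ++ [Letter.rho i]) : List (Letter M 0)) =
        Letter.lam i' :: (w ++ [Letter.rho i']) := congrArg Subtype.val heq
    clear heq
    injection h' with hh htail
    injection hh with hii
    obtain ⟨h1, h2, h3⟩ := uniq hv hw htail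
    subst hii h1
    rfl
  · rintro ⟨l, hlen, hcode⟩
    obtain ⟨i, v, rfl, hv⟩ := hcode
    have hvlen : v.length = n := by simp at hlen; omega
    exact ⟨(i, ⟨v, hvlen, hv⟩), rfl⟩

lemma e_succ (M n : ℕ) : e M 0 (n + 2) = M * cW M n := by
  unfold e
  rw [Nat.card_congr (listEquiv (n + 2) (codeE M 0)),
    ← Nat.card_congr (Equiv.ofBijective _ (h_bij M n)), Nat.card_prod]
  simp [cW, Nat.card_eq_fintype_card]

lemma e_odd (M n : ℕ) (hn : Odd n) : e M 0 n = 0 := by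
  have : IsEmpty {w : Fin n → Letter M 0 // codeE M 0 (List.ofFn w)} := by
    constructor
    rintro ⟨w, i, v, hw, hv⟩
    have hlen : n = v.length + 2 := by
      have := congrArg List.length hw
      simpa using this
    have hev := good_even (show Good M v from hv)
    rw [hlen, Nat.odd_iff] at hn
    rw [Nat.even_iff] at hev
    omega
  unfold e
  exact Nat.card_of_isEmpty

end DyckProof

open MotzkinPaper in
/-- In the Dyck case `N = 0`, the number of Dyck code words of length `2k` is
`C_{k−1}·M^k` (Catalan number), and there are no odd-length code words. -/
theorem dyck_code_count (M : ℕ) (hM : 1 ≤ M) :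
    (∀ k, 1 ≤ k → e M 0 (2 * k) = catalan (k - 1) * M ^ k) ∧
      (∀ n, Odd n → e M 0 n = 0) := by
  constructor
  · intro k hk
    obtain ⟨k', rfl⟩ : ∃ k', k = k' + 1 := ⟨k - 1, by omega⟩
    have h1 : 2 * (k' + 1) = 2 * k' + 2 := by ring
    rw [h1, DyckProof.e_succ, DyckProof.cW_even]
    simp only [Nat.add_sub_cancel]
    rw [pow_succ]
    ring
  · intro n hn
    exact DyckProof.e_odd M n hn
end

section
/- For every n ≥ 1, the number of n-periodic points of the Motzkin shift M(M,N) equals ∑_{i=0}^{n−1} binom(n, i) N^i p_{n−i}(D_M) + N^n, where p_m(D_M) is the number of m-periodic points of the Dyck shift on 2M symbols. -/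
open PowerSeries

namespace MotzkinPaper

/-- Membership in the Motzkin shift `M(M,N)`: a bi-infinite sequence all of whose
finite subwords have nonzero reduction in the Motzkin monoid.  For `N = 0` this is
the Dyck shift `D_M`. -/
def inMotzkinShift (M N : ℕ) (x : ℤ → Letter M N) : Prop :=
  ∀ (i : ℤ) (m : ℕ), red M N (List.ofFn fun k : Fin m => x (i + k)) ≠ none

/-- `p M N n`: the number of `n`-periodic points of the Motzkin shift `M(M,N)`. -/
noncomputable def p (M N n : ℕ) : ℕ :=
  Nat.card {x : ℤ → Letter M N // inMotzkinShift M N x ∧ ∀ k : ℤ, x (k + n) = x k}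

end MotzkinPaper

/-!
An `n`-periodic point is the bi-infinite power `w^∞` of a word `w` of length `n`. It lies in the
shift iff every power `w^k` has nonzero reduction: every subword of `w^∞` is a factor of some
`w^k`, and factors of words with nonzero reduction have nonzero reduction. Neutral symbols act
as the identity, so `w^k` reduces to zero iff the `k`-th power of the bracket subword of `w`
does. Hence a periodic point amounts to a choice of `i` neutral positions (`choose n i` ways),
of the neutral symbols there (`N ^ i` ways), and of an `(n - i)`-periodic point of the Dyck shift
on the remaining positions; for `i = n` the last choice is empty.
-/

namespace MotzkinPaper

variable {M N : ℕ}

lemma step_none (a : Letter M N) : step M N none a = none := by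
  cases a <;> rfl

lemma foldl_step_none (v : List (Letter M N)) : v.foldl (step M N) none = none := by
  induction v with
  | nil => rfl
  | cons a v ih => rwa [List.foldl_cons, step_none]

lemma red_append (u v : List (Letter M N)) :
    red M N (u ++ v) = v.foldl (step M N) (red M N u) :=
  List.foldl_append

def StackPrefix : El M → El M → Prop
  | _, none => True
  | none, some _ => False
  | some (_, l₁), some (_, l₂) => l₁ <+: l₂

lemma stackPrefix_nil (r : List (Fin M)) (s : El M) : StackPrefix (some (r, [])) s := by
  rcases s with _ | ⟨_, l⟩
  · trivial
  · exact List.nil_prefix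

lemma stackPrefix_step {s₁ s₂ : El M} (h : StackPrefix s₁ s₂) (a : Letter M N) :
    StackPrefix (step M N s₁ a) (step M N s₂ a) := by
  rcases s₂ with _ | ⟨r₂, l₂⟩
  · rw [step_none]; trivial
  rcases s₁ with _ | ⟨r₁, l₁⟩
  · exact h.elim
  obtain ⟨t, rfl⟩ := h
  rcases a with i | j | j
  · exact List.prefix_append (i :: l₁) t
  · rcases l₁ with _ | ⟨i, l₁⟩
    · exact stackPrefix_nil _ _
    · simp only [step, List.cons_append]
      split_ifs
      · exact List.prefix_append l₁ t
      · trivial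
  · exact List.prefix_append l₁ t

lemma stackPrefix_foldl {s₁ s₂ : El M} (h : StackPrefix s₁ s₂) (v : List (Letter M N)) :
    StackPrefix (v.foldl (step M N) s₁) (v.foldl (step M N) s₂) := by
  induction v generalizing s₁ s₂ with
  | nil => exact h
  | cons a v ih => exact ih (stackPrefix_step h a)

/-- The prefix `u` only adds unmatched left brackets below those that `v` leaves open, so the
mismatch that makes `v` vanish still occurs. -/
lemma red_append_eq_none_of_right (u : List (Letter M N)) {v : List (Letter M N)}
    (hv : red M N v = none) : red M N (u ++ v) = none := by
  have h : StackPrefix (red M N v) (v.foldl (step M N) (red M N u)) :=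
    stackPrefix_foldl (stackPrefix_nil [] _) v
  rw [hv] at h
  rw [red_append]
  revert h
  cases v.foldl (step M N) (red M N u) <;> simp [StackPrefix]

lemma red_ne_none_of_infix {v w : List (Letter M N)} (h : v <:+: w) (hw : red M N w ≠ none) :
    red M N v ≠ none := by
  obtain ⟨s, t, rfl⟩ := h
  intro hv
  apply hw
  rw [red_append, red_append_eq_none_of_right s hv, foldl_step_none]

def dyckSplit (M N : ℕ) : Letter M N ≃ Letter M 0 ⊕ Fin N where
  toFun
    | .lam i => .inl (.lam i)
    | .rho i => .inl (.rho i)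
    | .neu j => .inr j
  invFun
    | .inl (.lam i) => .lam i
    | .inl (.rho i) => .rho i
    | .inr j => .neu j
  left_inv a := by cases a <;> rfl
  right_inv
    | .inl (.lam _) | .inl (.rho _) | .inr _ => rfl

def letterEquivSum (M N : ℕ) : Letter M N ≃ Fin M ⊕ Fin M ⊕ Fin N where
  toFun
    | .lam i => .inl i
    | .rho i => .inr (.inl i)
    | .neu j => .inr (.inr j)
  invFun
    | .inl i => .lam i
    | .inr (.inl i) => .rho i
    | .inr (.inr j) => .neu j
  left_inv a := by cases a <;> rfl
  right_inv
    | .inl _ | .inr (.inl _) | .inr (.inr _) => rfl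

instance : Fintype (Letter M N) := Fintype.ofEquiv _ (letterEquivSum M N).symm

lemma foldl_step_eq_foldl_filterMap (s : El M) (v : List (Letter M N)) :
    v.foldl (step M N) s =
      (v.filterMap fun a => (dyckSplit M N a).getLeft?).foldl (step M 0) s := by
  induction v generalizing s with
  | nil => rfl
  | cons a v ih =>
    rcases s with _ | ⟨r, l⟩ <;> rcases a with i | i | j <;> exact ih _

lemma red_eq_red_filterMap (v : List (Letter M N)) :
    red M N v = red M 0 (v.filterMap fun a => (dyckSplit M N a).getLeft?) :=
  foldl_step_eq_foldl_filterMap _ v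

/-- The condition for the periodic point `w^∞` to lie in the shift. -/
def PowersNonzero (M N : ℕ) (w : List (Letter M N)) : Prop :=
  ∀ k, red M N (List.replicate k w).flatten ≠ none

lemma powersNonzero_nil : PowersNonzero M N [] := by
  intro k
  rw [List.flatten_replicate_nil]
  exact Option.some_ne_none _

lemma powersNonzero_iff_filterMap (w : List (Letter M N)) :
    PowersNonzero M N w ↔
      PowersNonzero M 0 (w.filterMap fun a => (dyckSplit M N a).getLeft?) := by
  refine forall_congr' fun k => ?_
  rw [red_eq_red_filterMap, List.filterMap_flatten, List.map_replicate]

section Window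

open Function

variable {α : Type*}

def window (x : ℤ → α) (i : ℤ) (m : ℕ) : List α :=
  List.ofFn fun k : Fin m => x (i + k)

lemma window_add (x : ℤ → α) (i : ℤ) (a b : ℕ) :
    window x i (a + b) = window x i a ++ window x (i + a) b := by
  simp only [window, List.ofFn_add, Fin.val_castLE, Fin.val_natAdd, Nat.cast_add, add_assoc]

lemma window_add_mul {x : ℤ → α} {n : ℤ} (hx : Periodic x n) (i j : ℤ) (m : ℕ) :
    window x (i + j * n) m = window x i m := by
  refine congrArg List.ofFn (funext fun k => ?_)
  rw [add_right_comm]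
  exact hx.int_mul j _

lemma window_mul {x : ℤ → α} {n : ℕ} (hx : Periodic x n) (k : ℕ) :
    window x 0 (n * k) = (List.replicate k (window x 0 n)).flatten := by
  induction k with
  | zero => rfl
  | succ k ih =>
    have h := window_add_mul hx 0 k n
    rw [zero_add] at h
    rw [Nat.mul_succ, window_add, ih, List.replicate_succ', List.flatten_append,
      List.flatten_singleton, zero_add, Nat.cast_mul, mul_comm, h]

lemma exists_infix_window_mul {x : ℤ → α} {n : ℕ} (hx : Periodic x n) (hn : 0 < n) (i : ℤ)
    (m : ℕ) : ∃ k, window x i m <:+: window x 0 (n * k) := by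
  obtain ⟨j, hj⟩ : ∃ j : ℕ, (j : ℤ) = i % n :=
    ⟨(i % n).toNat, Int.toNat_of_nonneg (Int.emod_nonneg i (by omega))⟩
  have hi : window x i m = window x j m := by
    rw [hj, ← window_add_mul hx (i % n) (i / n), Int.emod_add_ediv_mul]
  have hsuffix : window x j m <:+ window x 0 (j + m) := by
    rw [window_add, zero_add]
    exact List.suffix_append _ _
  have hprefix : window x 0 (j + m) <+: window x 0 (n * (j + m)) := by
    obtain ⟨r, hr⟩ := Nat.exists_eq_add_of_le (Nat.le_mul_of_pos_left (j + m) hn)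
    rw [hr, window_add x 0 (j + m) r]
    exact List.prefix_append _ _
  exact ⟨j + m, hi ▸ hsuffix.isInfix.trans hprefix.isInfix⟩

lemma inMotzkinShift_iff_powersNonzero {x : ℤ → Letter M N} {n : ℕ} (hx : Periodic x n)
    (hn : 0 < n) : inMotzkinShift M N x ↔ PowersNonzero M N (window x 0 n) := by
  refine ⟨fun h k => window_mul hx k ▸ h 0 (n * k), fun h i m => ?_⟩
  obtain ⟨k, hk⟩ := exists_infix_window_mul hx hn i m
  exact red_ne_none_of_infix hk (window_mul hx k ▸ h k)

def periodicEquiv {n : ℕ} (hn : 0 < n) : {x : ℤ → α // Periodic x n} ≃ (Fin n → α) where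
  toFun x i := x.1 i
  invFun w := ⟨fun z => w ⟨(z % n).toNat, by
      have := Int.emod_lt_of_pos z (by omega : (0 : ℤ) < n); omega⟩,
    fun z => by simp only [Int.add_emod_right]⟩
  left_inv x := by
    refine Subtype.ext (funext fun z => ?_)
    change x.1 ((z % n).toNat : ℤ) = x.1 z
    rw [Int.toNat_of_nonneg (Int.emod_nonneg z (by omega)), Int.emod_def, mul_comm]
    exact x.2.sub_int_mul_eq _
  right_inv w := funext fun i => congrArg w (Fin.ext (by simp [Int.emod_eq_of_lt]))

lemma ofFn_periodicEquiv {n : ℕ} (hn : 0 < n) (x : {x : ℤ → α // Periodic x n}) :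
    List.ofFn (periodicEquiv hn x) = window x.1 0 n := by
  simp only [window, zero_add]
  rfl

end Window

lemma p_eq_card_powersNonzero {n : ℕ} (hn : 0 < n) :
    p M N n = Nat.card {w : Fin n → Letter M N // PowersNonzero M N (List.ofFn w)} := by
  refine Nat.card_congr <| (Equiv.subtypeEquivRight fun x => and_comm).trans <|
    (Equiv.subtypeSubtypeEquivSubtypeInter (fun x : ℤ → Letter M N => Function.Periodic x n)
      _).symm.trans <|
    Equiv.subtypeEquiv (periodicEquiv hn) fun x => ?_
  rw [ofFn_periodicEquiv, inMotzkinShift_iff_powersNonzero x.2 hn]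

section Counting

open Finset

variable {α β : Type*} [Fintype α] [Fintype β]

lemma card_subtype_ofFn_succ (P : List α → Prop) (m : ℕ) :
    Nat.card {d : Fin (m + 1) → α // P (List.ofFn d)} =
      ∑ a, Nat.card {d : Fin m → α // P (a :: List.ofFn d)} := by
  rw [← Nat.card_sigma]
  refine Nat.card_congr <| (Equiv.subtypeEquiv (Fin.consEquiv fun _ => α) fun d => ?_).symm.trans
    (Equiv.subtypeProdEquivSigmaSubtype fun a d => P (a :: List.ofFn d))
  simp only [Fin.consEquiv_apply, List.ofFn_succ, Fin.cons_zero, Fin.cons_succ]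

/-- `i` counts the `β`-letters: `n.choose i` choices of their positions, `card β ^ i` of the
letters themselves. -/
theorem card_subtype_filterMap_getLeft (P : List α → Prop) (n : ℕ) :
    Nat.card {w : Fin n → α ⊕ β // P ((List.ofFn w).filterMap Sum.getLeft?)} =
      ∑ i ∈ range (n + 1), n.choose i * Fintype.card β ^ i *
        Nat.card {d : Fin (n - i) → α // P (List.ofFn d)} := by
  induction n generalizing P with
  | zero =>
    rw [zero_add, range_one, sum_singleton, Nat.choose_self, pow_zero, one_mul, one_mul,
      Nat.sub_self]
    exact Nat.card_congr (Equiv.subtypeEquiv (Equiv.ofUnique _ _) fun _ => by simp)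
  | succ n ih =>
    rw [card_subtype_ofFn_succ (fun l => P (l.filterMap Sum.getLeft?)), Fintype.sum_sum_type]
    have pascal := sum_choose_succ_mul (R := ℕ)
      (fun i j => Fintype.card β ^ i * Nat.card {d : Fin j → α // P (List.ofFn d)}) n
    simp only [Nat.cast_id, ← mul_assoc] at pascal
    simp only [List.filterMap_cons, Sum.getLeft?_inl, Sum.getLeft?_inr]
    rw [sum_congr rfl fun a _ => ih fun l => P (a :: l), ih P, sum_const, card_univ, smul_eq_mul,
      sum_comm, pascal]
    congr 1
    · refine sum_congr rfl fun i hi => ?_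
      rw [← mul_sum, Nat.sub_add_comm (Nat.lt_succ_iff.mp (mem_range.mp hi)),
        card_subtype_ofFn_succ]
    · rw [mul_sum]
      refine sum_congr rfl fun i _ => ?_
      ring

end Counting

lemma card_powersNonzero_fin_zero :
    Nat.card {d : Fin 0 → Letter M N // PowersNonzero M N (List.ofFn d)} = 1 := by
  rw [Nat.card_congr (Equiv.subtypeUnivEquiv fun d => by
    rw [List.ofFn_zero]; exact powersNonzero_nil), Nat.card_unique]

lemma p_eq_card_dyck_neutral {n : ℕ} (hn : 0 < n) :
    p M N n = Nat.card {w : Fin n → Letter M 0 ⊕ Fin N //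
      PowersNonzero M 0 ((List.ofFn w).filterMap Sum.getLeft?)} := by
  rw [p_eq_card_powersNonzero hn]
  refine Nat.card_congr <|
    Equiv.subtypeEquiv ((Equiv.refl _).arrowCongr (dyckSplit M N)) fun w => ?_
  change _ ↔ PowersNonzero M 0 ((List.ofFn (dyckSplit M N ∘ w)).filterMap Sum.getLeft?)
  rw [powersNonzero_iff_filterMap, ← List.map_ofFn, List.filterMap_map]
  rfl

end MotzkinPaper

open MotzkinPaper in
theorem motzkin_periodic_points_via_dyck_general (M N n : ℕ) (hn : 1 ≤ n) :
    p M N n = (∑ i ∈ Finset.range n, n.choose i * N ^ i * p M 0 (n - i)) + N ^ n := by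
  rw [p_eq_card_dyck_neutral hn, card_subtype_filterMap_getLeft, Fintype.card_fin,
    Finset.sum_range_succ, Nat.choose_self, Nat.sub_self, card_powersNonzero_fin_zero, one_mul,
    mul_one]
  congr 1
  refine Finset.sum_congr rfl fun i hi => ?_
  rw [p_eq_card_powersNonzero (Nat.sub_pos_of_lt (Finset.mem_range.mp hi))]

open MotzkinPaper in
/-- The number of `n`-periodic points of the Motzkin shift is expressed through those
of the Dyck shift: `p_n(M(M,N)) = ∑_{i=0}^{n−1} C(n,i) Nⁱ p_{n−i}(D_M) + Nⁿ`. -/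
theorem motzkin_periodic_points_via_dyck (M N n : ℕ) (hM : 1 ≤ M) (hN : 1 ≤ N) (hn : 1 ≤ n) :
    p M N n = (∑ i ∈ Finset.range n, n.choose i * N ^ i * p M 0 (n - i)) + N ^ n :=
  motzkin_periodic_points_via_dyck_general M N n hn
end

section
/- The topological entropy of the Motzkin shift M(M,N) equals log(M+N+1); equivalently, lim_{n→∞} (1/n) log p_n(M(M,N)) = log(M+N+1). -/
open PowerSeries

namespace MotzkinProof
open MotzkinPaper

variable {M N : ℕ}

/-- fold `step` from an arbitrary state. -/
abbrev F (M N : ℕ) (e : El M) (w : List (Letter M N)) : El M := w.foldl (step M N) e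

lemma step_none (a : Letter M N) : step M N none a = none := rfl

lemma F_none (w : List (Letter M N)) : F M N none w = none := by
  induction w with
  | nil => rfl
  | cons a w ih => simpa [F, step_none] using ih

lemma red_eq_F (w : List (Letter M N)) : red M N w = F M N (one M) w := rfl

lemma F_append (e : El M) (u v : List (Letter M N)) :
    F M N e (u ++ v) = F M N (F M N e u) v := List.foldl_append ..

/-- Cancellation core of multiplication in the Motzkin monoid. -/
def mulCore (M : ℕ) (r1 : List (Fin M)) : List (Fin M) → List (Fin M) → List (Fin M) → El M
  | l1, [], l2 => some (r1, l2 ++ l1)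
  | [], j :: r2, l2 => some (r1 ++ j :: r2, l2)
  | i :: l1, j :: r2, l2 => if i = j then mulCore M r1 l1 r2 l2 else none

/-- Multiplication in the Motzkin monoid. -/
def mul (M : ℕ) : El M → El M → El M
  | none, _ => none
  | some _, none => none
  | some (r1, l1), some (r2, l2) => mulCore M r1 l1 r2 l2

@[simp] lemma mul_none_left (e : El M) : mul M none e = none := rfl

@[simp] lemma mul_none_right (e : El M) : mul M e none = none := by
  cases e with
  | none => rfl
  | some p => cases p; rfl

@[simp] lemma mulCore_rnil (r1 l1 l2 : List (Fin M)) :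
    mulCore M r1 l1 [] l2 = some (r1, l2 ++ l1) := by
  cases l1 <;> rfl

@[simp] lemma mulCore_lnil (r1 r2 l2 : List (Fin M)) :
    mulCore M r1 [] r2 l2 = some (r1 ++ r2, l2) := by
  cases r2 with
  | nil => simp
  | cons j r2 => rfl

@[simp] lemma mul_one_right (e : El M) : mul M e (one M) = e := by
  cases e with
  | none => rfl
  | some p => cases p with | mk r l => simp [one, mul]

@[simp] lemma mul_one_left (e : El M) : mul M (one M) e = e := by
  cases e with
  | none => rfl
  | some p => cases p with | mk r l => simp [one, mul]

lemma step_mul (e : El M) (a : Letter M N) (m : El M) :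
    mul M (step M N e a) m = mul M e (mul M (step M N (one M) a) m) := by
  cases e with
  | none => simp [step_none]
  | some p =>
    obtain ⟨r, l⟩ := p
    cases m with
    | none => simp
    | some q =>
      obtain ⟨r2, l2⟩ := q
      cases a with
      | neu j => simp [step, one, mul]
      | lam i =>
        show mulCore M r (i :: l) r2 l2 = mul M (some (r, l)) (mulCore M [] [i] r2 l2)
        cases r2 with
        | nil => simp [mul, mulCore]
        | cons j r2' =>
          show mulCore M r (i :: l) (j :: r2') l2 = _
          rw [mulCore]
          by_cases hij : i = j
          · subst hij
            simp only [mulCore, if_pos rfl]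
            cases r2' with
            | nil => simp [mul]
            | cons j' r2'' => simp [mul, mulCore]
          · simp [mulCore, hij, mul]
      | rho j =>
        cases l with
        | nil =>
          show mul M (some (r ++ [j], [])) (some (r2, l2))
              = mul M (some (r, [])) (mulCore M [j] [] r2 l2)
          simp [mul]
        | cons i t =>
          show mul M (step M N (some (r, i :: t)) (.rho j)) (some (r2, l2))
              = mul M (some (r, i :: t)) (mulCore M [j] [] r2 l2)
          simp only [step, mulCore_lnil]
          by_cases hij : i = j
          · subst hij
            simp [mul, mulCore]
          · simp [hij, mul, mulCore, Ne.symm hij]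

lemma F_eq_mul (u : List (Letter M N)) : ∀ e : El M, F M N e u = mul M e (red M N u) := by
  induction u with
  | nil => intro e; exact (mul_one_right e).symm
  | cons a u ih =>
    intro e
    have h1 : F M N e (a :: u) = F M N (step M N e a) u := rfl
    have h2 : red M N (a :: u) = F M N (step M N (one M) a) u := rfl
    rw [h1, ih, h2, ih, step_mul]

lemma red_append (u v : List (Letter M N)) :
    red M N (u ++ v) = mul M (red M N u) (red M N v) := by
  rw [red_eq_F, F_append, ← red_eq_F, F_eq_mul]

lemma red_ne_none_of_infix {u w : List (Letter M N)} (h : u <:+: w)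
    (hw : red M N w ≠ none) : red M N u ≠ none := by
  obtain ⟨s, t, rfl⟩ := h
  intro hu
  rw [red_append, red_append, hu, mul_none_right, mul_none_left] at hw
  exact hw rfl

end MotzkinProof
namespace MotzkinProof
open MotzkinPaper

variable {M N : ℕ}

/-- Swap left and right brackets. -/
def swapL : Letter M N → Letter M N
  | .lam i => .rho i
  | .rho i => .lam i
  | .neu j => .neu j

@[simp] lemma swapL_swapL (a : Letter M N) : swapL (swapL a) = a := by
  cases a <;> rfl

/-- The anti-involution on monoid elements. -/
def invol (M : ℕ) : El M → El M
  | none => none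
  | some (r, l) => some (l, r)

@[simp] lemma invol_eq_none_iff (e : El M) : invol M e = none ↔ e = none := by
  cases e with
  | none => simp [invol]
  | some p => cases p; simp [invol]

lemma step_invol (m : El M) (a : Letter M N) :
    step M N (invol M m) (swapL a) = invol M (mul M (step M N (one M) a) m) := by
  cases m with
  | none => simp [invol, step_none]
  | some q =>
    obtain ⟨r2, l2⟩ := q
    cases a with
    | neu j => simp [swapL, invol, step, one, mul, mulCore]
    | lam i =>
      show step M N (some (l2, r2)) (.rho i) = invol M (mulCore M [] [i] r2 l2)
      cases r2 with
      | nil => simp [step, mulCore, invol]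
      | cons j r2' =>
        show _ = invol M (if i = j then mulCore M [] [] r2' l2 else none)
        by_cases hij : i = j
        · subst hij
          simp [step, mulCore, invol]
        · simp [step, hij, Ne.symm hij, invol]
    | rho j =>
      show step M N (some (l2, r2)) (.lam j) = invol M (mulCore M [j] [] r2 l2)
      simp [step, invol]

lemma red_reverse_swap (u : List (Letter M N)) :
    red M N ((u.map swapL).reverse) = invol M (red M N u) := by
  induction u with
  | nil => rfl
  | cons a u ih =>
    have h1 : ((a :: u).map swapL).reverse = (u.map swapL).reverse ++ [swapL a] := by
      simp
    have h2 : red M N (a :: u) = mul M (step M N (one M) a) (red M N u) := by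
      have h : red M N (a :: u) = F M N (step M N (one M) a) u := rfl
      rw [h, F_eq_mul]
    have h3 : red M N [swapL a] = step M N (one M) (swapL a) := rfl
    rw [h1, red_append, ih, h2, h3, ← step_invol (red M N u) a]
    -- now: mul (invol red u) (step one (swapL a)) = step (invol (red u)) (swapL a)
    cases hred : red M N u with
    | none => simp [invol, step_none]
    | some q =>
      obtain ⟨r, l⟩ := q
      cases a with
      | neu j => simp [swapL, invol, step, mul, one, mulCore]
      | lam i =>
        show mul M (some (l, r)) (step M N (one M) (.rho i)) = step M N (some (l, r)) (.rho i)
        cases r with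
        | nil => simp [step, one, mul, mulCore]
        | cons c r' =>
          by_cases hci : c = i
          · subst hci
            simp [step, one, mul, mulCore]
          · simp [step, one, mul, mulCore, hci]
      | rho j =>
        show mul M (some (l, r)) (step M N (one M) (.lam j)) = step M N (some (l, r)) (.lam j)
        simp [step, one, mul, mulCore]

/-- `rep w K` is the `K`-fold repetition of `w`. -/
def rep (w : List α) : ℕ → List α
  | 0 => []
  | K + 1 => rep w K ++ w

@[simp] lemma rep_length (w : List α) (K : ℕ) : (rep w K).length = K * w.length := by
  induction K with
  | zero => simp [rep]
  | succ K ih => simp [rep, ih, Nat.succ_mul]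

lemma red_rep_L {w : List (Letter M N)} {l : List (Fin M)}
    (hw : red M N w = some ([], l)) (K : ℕ) :
    ∃ l', red M N (rep w K) = some ([], l') := by
  induction K with
  | zero => exact ⟨[], rfl⟩
  | succ K ih =>
    obtain ⟨lK, hK⟩ := ih
    refine ⟨l ++ lK, ?_⟩
    show red M N (rep w K ++ w) = _
    rw [red_append, hK, hw]
    simp [mul]

lemma red_rep_R {w : List (Letter M N)} {r : List (Fin M)}
    (hw : red M N w = some (r, [])) (K : ℕ) :
    ∃ r', red M N (rep w K) = some (r', []) := by
  induction K with
  | zero => exact ⟨[], rfl⟩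
  | succ K ih =>
    obtain ⟨rK, hK⟩ := ih
    refine ⟨rK ++ r, ?_⟩
    show red M N (rep w K ++ w) = _
    rw [red_append, hK, hw]
    simp [mul]

end MotzkinProof
namespace MotzkinProof
open MotzkinPaper

variable {M N : ℕ}

/-- The reduced alphabet: colored up-steps, colored neutrals, one uncolored down-step. -/
abbrev AA (M N : ℕ) : Type := Fin M ⊕ (Fin N ⊕ Unit)

/-- Forget the color of right brackets. -/
def sh : Letter M N → AA M N
  | .lam i => .inl i
  | .rho _ => .inr (.inr ())
  | .neu j => .inr (.inl j)

/-- Height weight. -/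
def wt : AA M N → ℤ
  | .inl _ => 1
  | .inr (.inl _) => 0
  | .inr (.inr _) => -1

/-- Total weight of a word. -/
def Sw (v : List (AA M N)) : ℤ := (v.map wt).sum

@[simp] lemma Sw_nil : Sw ([] : List (AA M N)) = 0 := rfl

@[simp] lemma Sw_cons (a : AA M N) (v : List (AA M N)) : Sw (a :: v) = wt a + Sw v := by
  simp [Sw]

@[simp] lemma Sw_append (u v : List (AA M N)) : Sw (u ++ v) = Sw u + Sw v := by
  simp [Sw]

/-- Realization: replace each uncolored down-step with a right bracket matching the
nearest unmatched up-step to its left (default color `d` on underflow). -/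
def realize (d : Fin M) (N : ℕ) : List (Fin M) → List (AA M N) → List (Letter M N)
  | _, [] => []
  | st, (.inl i) :: v => .lam i :: realize d N (i :: st) v
  | st, (.inr (.inl j)) :: v => .neu j :: realize d N st v
  | [], (.inr (.inr _)) :: v => .rho d :: realize d N [] v
  | c :: st', (.inr (.inr _)) :: v => .rho c :: realize d N st' v

@[simp] lemma realize_nil (d : Fin M) (st : List (Fin M)) :
    realize d N st [] = [] := by
  rw [realize]

@[simp] lemma realize_inl (d : Fin M) (st : List (Fin M)) (i : Fin M) (v : List (AA M N)) :
    realize d N st (.inl i :: v) = .lam i :: realize d N (i :: st) v := by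
  rw [realize]

@[simp] lemma realize_neu (d : Fin M) (st : List (Fin M)) (j : Fin N) (v : List (AA M N)) :
    realize d N st (.inr (.inl j) :: v) = .neu j :: realize d N st v := by
  rw [realize]

@[simp] lemma realize_dn_nil (d : Fin M) (u : Unit) (v : List (AA M N)) :
    realize d N [] (.inr (.inr u) :: v) = .rho d :: realize d N [] v := by
  rw [realize]

@[simp] lemma realize_dn_cons (d : Fin M) (c : Fin M) (st' : List (Fin M)) (u : Unit)
    (v : List (AA M N)) :
    realize d N (c :: st') (.inr (.inr u) :: v) = .rho c :: realize d N st' v := by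
  rw [realize]

lemma F_cons (e : El M) (a : Letter M N) (w : List (Letter M N)) :
    F M N e (a :: w) = F M N (step M N e a) w := rfl

@[simp] lemma map_sh_realize (d : Fin M) (v : List (AA M N)) :
    ∀ st, (realize d N st v).map sh = v := by
  induction v with
  | nil => intro st; simp
  | cons a v ih =>
    intro st
    match a with
    | .inl i => simp [sh, ih]
    | .inr (.inl j) => simp [sh, ih]
    | .inr (.inr u) =>
      cases u
      cases st with
      | nil => simp [sh, ih]
      | cons c st' => simp [sh, ih]

lemma realize_length (d : Fin M) (v : List (AA M N)) (st : List (Fin M)) :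
    (realize d N st v).length = v.length := by
  have h := congrArg List.length (map_sh_realize d v st)
  rwa [List.length_map] at h

/-- If the word has no underflow relative to the initial stack, the realization
reduces with empty right part. -/
lemma realize_L (d : Fin M) :
    ∀ (v : List (AA M N)) (st r0 : List (Fin M)),
    (∀ j, 0 ≤ (st.length : ℤ) + Sw (v.take j)) →
    ∃ l, F M N (some (r0, st)) (realize d N st v) = some (r0, l) := by
  intro v
  induction v with
  | nil => intro st r0 _; exact ⟨st, by simp [F]⟩
  | cons a v ih =>
    intro st r0 h
    match a with
    | .inl i =>
      have h' : ∀ j, 0 ≤ ((i :: st).length : ℤ) + Sw (v.take j) := by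
        intro j
        have := h (j + 1)
        simp [List.take_succ_cons, wt] at this ⊢
        omega
      rw [realize_inl, F_cons]
      exact ih (i :: st) r0 h'
    | .inr (.inl j) =>
      have h' : ∀ j', 0 ≤ (st.length : ℤ) + Sw (v.take j') := by
        intro j'
        have := h (j' + 1)
        simp [List.take_succ_cons, wt] at this ⊢
        omega
      rw [realize_neu, F_cons]
      exact ih st r0 h'
    | .inr (.inr u) =>
      cases u
      cases st with
      | nil =>
        exfalso
        have := h 1
        simp [wt] at this
      | cons c st' =>
        have h' : ∀ j, 0 ≤ ((st' : List (Fin M)).length : ℤ) + Sw (v.take j) := by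
          intro j
          have := h (j + 1)
          simp [List.take_succ_cons, wt] at this ⊢
          omega
        rw [realize_dn_cons, F_cons]
        have hs : step M N (some (r0, c :: st')) (Letter.rho c) = some (r0, st') := by
          simp [step]
        rw [hs]
        exact ih st' r0 h'

/-- If every suffix has nonpositive weight and the initial stack is small enough,
the realization reduces with empty left (stack) part. -/
lemma realize_R (d : Fin M) :
    ∀ (v : List (AA M N)) (st r0 : List (Fin M)),
    (∀ j, Sw (v.drop j) ≤ 0) → ((st.length : ℤ) ≤ -Sw v) →
    ∃ r, F M N (some (r0, st)) (realize d N st v) = some (r, []) := by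
  intro v
  induction v with
  | nil =>
    intro st r0 _ hlen
    simp at hlen
    have hst : st = [] := by
      cases st with
      | nil => rfl
      | cons c st' => simp at hlen
    subst hst
    exact ⟨r0, by simp [F]⟩
  | cons a v ih =>
    intro st r0 h hlen
    have hdrop : ∀ j, Sw (v.drop j) ≤ 0 := fun j => by
      have := h (j + 1); simpa using this
    have hv0 : Sw v ≤ 0 := by simpa using h 1
    match a with
    | .inl i =>
      have hlen' : (((i :: st) : List (Fin M)).length : ℤ) ≤ -Sw v := by
        have hc : Sw ((.inl i : AA M N) :: v) = 1 + Sw v := by simp [wt]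
        rw [hc] at hlen
        simp only [List.length_cons]
        push_cast
        omega
      rw [realize_inl, F_cons]
      exact ih (i :: st) r0 hdrop hlen'
    | .inr (.inl j) =>
      have hlen' : ((st : List (Fin M)).length : ℤ) ≤ -Sw v := by
        have hc : Sw ((.inr (.inl j) : AA M N) :: v) = Sw v := by simp [wt]
        rw [hc] at hlen
        exact hlen
      rw [realize_neu, F_cons]
      exact ih st r0 hdrop hlen'
    | .inr (.inr u) =>
      cases u
      cases st with
      | nil =>
        rw [realize_dn_nil, F_cons]
        have hs : step M N (some (r0, [])) (Letter.rho d) = some (r0 ++ [d], []) := by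
          simp [step]
        rw [hs]
        refine ih [] (r0 ++ [d]) hdrop ?_
        simpa using hv0
      | cons c st' =>
        rw [realize_dn_cons, F_cons]
        have hs : step M N (some (r0, c :: st')) (Letter.rho c) = some (r0, st') := by
          simp [step]
        rw [hs]
        refine ih st' r0 hdrop ?_
        have hc : Sw ((.inr (.inr ()) : AA M N) :: v) = -1 + Sw v := by simp [wt]
        rw [hc] at hlen
        simp only [List.length_cons] at hlen
        push_cast at hlen ⊢
        omega

/-- Reconstruction: a word with nonzero reduction and no underflow is determined by
its `sh`-image. -/
lemma recon_L (d : Fin M) :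
    ∀ (w : List (Letter M N)) (st r0 : List (Fin M)),
    F M N (some (r0, st)) w ≠ none →
    (∀ j, 0 ≤ (st.length : ℤ) + Sw ((w.map sh).take j)) →
    w = realize d N st (w.map sh) := by
  intro w
  induction w with
  | nil => intro st r0 _ _; simp
  | cons a w ih =>
    intro st r0 hne h
    match a with
    | .lam i =>
      have h' : ∀ j, 0 ≤ ((i :: st).length : ℤ) + Sw ((w.map sh).take j) := by
        intro j
        have := h (j + 1)
        simp [sh, List.take_succ_cons, wt] at this ⊢
        omega
      have hne' : F M N (some (r0, i :: st)) w ≠ none := hne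
      simp only [List.map_cons, sh, realize_inl]
      exact congrArg _ (ih (i :: st) r0 hne' h')
    | .neu j =>
      have h' : ∀ j', 0 ≤ (st.length : ℤ) + Sw ((w.map sh).take j') := by
        intro j'
        have := h (j' + 1)
        simp [sh, List.take_succ_cons, wt] at this ⊢
        omega
      have hne' : F M N (some (r0, st)) w ≠ none := hne
      simp only [List.map_cons, sh, realize_neu]
      exact congrArg _ (ih st r0 hne' h')
    | .rho c =>
      cases st with
      | nil =>
        exfalso
        have := h 1
        simp [sh, wt] at this
      | cons c' st' =>
        have hcc : c' = c := by
          by_contra hne2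
          have hz : F M N (some (r0, c' :: st')) (Letter.rho c :: w) = none := by
            rw [F_cons]
            have : step M N (some (r0, c' :: st')) (Letter.rho c) = none := by
              simp [step, hne2]
            rw [this]
            exact F_none w
          exact hne hz
        subst hcc
        have h' : ∀ j, 0 ≤ ((st' : List (Fin M)).length : ℤ) + Sw ((w.map sh).take j) := by
          intro j
          have := h (j + 1)
          simp [sh, List.take_succ_cons, wt] at this ⊢
          omega
        have hne' : F M N (some (r0, st')) w ≠ none := by
          intro hz
          apply hne
          rw [F_cons]
          have : step M N (some (r0, c' :: st')) (Letter.rho c') = some (r0, st') := by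
            simp [step]
          rw [this]
          exact hz
        simp only [List.map_cons, sh, realize_dn_cons]
        exact congrArg _ (ih st' r0 hne' h')

end MotzkinProof
namespace MotzkinProof
open MotzkinPaper

variable {M N : ℕ}

/-- Cyclic rotation of a list. -/
def rot (v : List α) (k : ℕ) : List α := v.drop k ++ v.take k

@[simp] lemma rot_length (v : List α) (k : ℕ) : (rot v k).length = v.length := by
  simp [rot]
  omega

lemma Sw_rot (v : List (AA M N)) (k : ℕ) : Sw (rot v k) = Sw v := by
  have h := Sw_append (v.take k) (v.drop k)
  rw [List.take_append_drop] at h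
  simp only [rot, Sw_append]
  omega

lemma Sw_take_drop (v : List (AA M N)) (j : ℕ) : Sw (v.drop j) = Sw v - Sw (v.take j) := by
  have h := Sw_append (v.take j) (v.drop j)
  rw [List.take_append_drop] at h
  omega

/-- Key rotation lemma: rotating at a prefix-sum minimum keeps every prefix sum
at least `min 0 (Sw v)`. -/
lemma exists_good_rot (v : List (AA M N)) :
    ∃ k ≤ v.length, ∀ j, min 0 (Sw v) ≤ Sw ((rot v k).take j) := by
  classical
  set n := v.length with hn
  set P : ℕ → ℤ := fun i => Sw (v.take i) with hP
  obtain ⟨k, hk_mem, hk⟩ := Finset.exists_min_image (Finset.range (n + 1)) P ⟨0, by simp⟩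
  have hkn : k ≤ n := by
    have := Finset.mem_range.mp hk_mem
    omega
  have hPstable : ∀ i, n ≤ i → P i = P n := by
    intro i hi
    show Sw (v.take i) = Sw (v.take n)
    rw [List.take_of_length_le (by omega), List.take_of_length_le (by omega)]
  have hkmin : ∀ i, P k ≤ P i := by
    intro i
    by_cases hi : i ≤ n
    · exact hk i (Finset.mem_range.mpr (by omega))
    · rw [hPstable i (by omega)]
      exact hk n (Finset.mem_range.mpr (by omega))
  have hPn : P n = Sw v := by
    show Sw (v.take n) = Sw v
    rw [List.take_of_length_le (by omega)]
  refine ⟨k, hkn, ?_⟩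
  intro j
  have hsplit : (rot v k).take j = (v.drop k).take j ++ (v.take k).take (j - (v.drop k).length) := by
    rw [rot, List.take_append]
  have hdl : (v.drop k).length = n - k := by simp [hn]
  have h1 : Sw ((v.drop k).take j) = P (k + j) - P k := by
    have : v.take (k + j) = v.take k ++ (v.drop k).take j := List.take_add ..
    have h2 : P (k + j) = P k + Sw ((v.drop k).take j) := by
      show Sw (v.take (k+j)) = _
      rw [this]; simp [hP]
    omega
  have h2 : (v.take k).take (j - (v.drop k).length) = v.take (min (j - (n - k)) k) := by
    rw [hdl, List.take_take]
  rw [hsplit, Sw_append, h1, h2]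
  by_cases hj : j ≤ n - k
  · have hz : min (j - (n - k)) k = 0 := by omega
    rw [hz, List.take_zero]
    have := hkmin (k + j)
    simp only [Sw_nil, add_zero]
    have hmin : min 0 (Sw v) ≤ 0 := min_le_left _ _
    omega
  · have hPkj : P (k + j) = Sw v := by
      rw [hPstable (k + j) (by omega), hPn]
    have := hkmin (min (j - (n - k)) k)
    rw [hPkj]
    have hmin : min 0 (Sw v) ≤ Sw v := min_le_right _ _
    show min 0 (Sw v) ≤ Sw v - P k + P (min (j - (n - k)) k)
    omega

lemma rot_getElem (v : List α) (k p : ℕ) (hk : k ≤ v.length) (hp : p < v.length) :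
    (rot v k)[p]'(by simpa using hp) = v[(p + k) % v.length]'(Nat.mod_lt _ (by omega)) := by
  have hdl : (v.drop k).length = v.length - k := by simp
  by_cases h : p < v.length - k
  · have h1 : (rot v k)[p]'(by simpa using hp) = (v.drop k)[p]'(by omega) := by
      simp only [rot]
      exact List.getElem_append_left (by omega)
    rw [h1, List.getElem_drop]
    congr 1
    have h2 : (p + k) % v.length = p + k := Nat.mod_eq_of_lt (by omega)
    omega
  · have h1 : (rot v k)[p]'(by simpa using hp)
        = (v.take k)[p - (v.length - k)]'(by simp; omega) := by
      simp only [rot]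
      rw [List.getElem_append_right (by omega)]
      congr 1
      omega
    rw [h1, List.getElem_take]
    congr 1
    have h2 : (p + k) % v.length = p + k - v.length := by
      have hlt : p + k - v.length < v.length := by omega
      have hge : v.length ≤ p + k := by omega
      conv_lhs => rw [show p + k = (p + k - v.length) + 1 * v.length by omega]
      rw [Nat.add_mul_mod_self_right]
      exact Nat.mod_eq_of_lt (by omega)
    omega

end MotzkinProof
namespace MotzkinProof
open MotzkinPaper

variable {M N : ℕ}

section Periodic

variable {n : ℕ} {x : ℤ → Letter M N}

/-- The window of length `n` starting at position `k`. -/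
def W (x : ℤ → Letter M N) (n : ℕ) (k : ℤ) : List (Letter M N) :=
  List.ofFn fun t : Fin n => x (k + t)

@[simp] lemma W_length {k : ℤ} : (W x n k).length = n := by simp [W]

lemma W_getElem {k : ℤ} {t : ℕ} (ht : t < (W x n k).length) :
    (W x n k)[t] = x (k + t) := by
  simp [W]

lemma per_int (hper : ∀ k : ℤ, x (k + n) = x k) (a q : ℤ) : x (a + q * n) = x a := by
  have hp : Function.Periodic x (n : ℤ) := hper
  exact (hp.int_mul q) a

lemma per_nat_mod (hn : 0 < n) (hper : ∀ k : ℤ, x (k + n) = x k) (m : ℕ) :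
    x m = x ((m % n : ℕ) : ℤ) := by
  have hnat : m % n + m / n * n = m := Nat.mod_add_div' m n
  have hcast : ((m % n : ℕ) : ℤ) + ((m / n : ℕ) : ℤ) * (n : ℤ) = (m : ℤ) := by
    exact_mod_cast congrArg (Nat.cast : ℕ → ℤ) hnat
  have := per_int hper ((m % n : ℕ) : ℤ) ((m / n : ℕ) : ℤ)
  rw [hcast] at this
  exact this

/-- A periodic point is determined by one window. -/
lemma per_eq_of_window (hn : 0 < n) (hper : ∀ k : ℤ, x (k + n) = x k) (t k : ℤ) :
    x t = x (k + (t - k) % n) := by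
  have hmod : (t - k) % (n : ℤ) + ((t - k) / n) * n = t - k := by
    rw [mul_comm]
    exact Int.emod_add_mul_ediv (t - k) n
  have := per_int hper (k + (t - k) % n) ((t - k) / n)
  rw [show k + (t - k) % (n:ℤ) + ((t - k) / n) * n = t by omega] at this
  exact this

lemma W_rot (hn : 0 < n) (hper : ∀ k : ℤ, x (k + n) = x k) (k : ℕ) (hk : k ≤ n) :
    W x n k = rot (W x n 0) k := by
  apply List.ext_getElem
  · simp
  intro p hp hp2
  have hpn : p < n := by simpa using hp
  rw [rot_getElem (W x n 0) k p (by simpa using hk) (by simpa using hpn)]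
  have hidx : (p + k) % (W x n 0).length = (k + p) % n := by
    rw [W_length, Nat.add_comm]
  rw [W_getElem, W_getElem]
  rw [hidx]
  have key := per_nat_mod hn hper (k + p)
  have h1 : ((k : ℤ) + p) = ((k + p : ℕ) : ℤ) := by push_cast; ring
  rw [h1, key, zero_add]

lemma rep_W_getElem (hn : 0 < n) (hper : ∀ k : ℤ, x (k + n) = x k) (K : ℕ) :
    ∀ (q : ℕ) (hq : q < (rep (W x n 0) K).length), (rep (W x n 0) K)[q] = x q := by
  induction K with
  | zero => intro q hq; simp [rep] at hq
  | succ K ih =>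
    intro q hq
    have hlen : (rep (W x n 0) K).length = K * n := by simp
    show (rep (W x n 0) K ++ W x n 0)[q]'(by simpa [rep] using hq) = x q
    rcases Nat.lt_or_ge q (K * n) with h | h
    · rw [List.getElem_append_left (by omega)]
      exact ih q (by omega)
    · rw [List.getElem_append_right (by rw [hlen]; omega)]
      rw [W_getElem, hlen, zero_add]
      have := per_int hper ((q - K * n : ℕ) : ℤ) (K : ℤ)
      have hc : ((q - K * n : ℕ) : ℤ) + (K : ℤ) * (n : ℤ) = (q : ℤ) := by
        have hq2 : q < K * n + n := by
          simp [rep] at hq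
          omega
        push_cast
        omega
      rw [hc] at this
      exact this.symm

/-- Every factor of a periodic point is a factor of a power of its base window. -/
lemma factor_infix_rep (hn : 0 < n) (hper : ∀ k : ℤ, x (k + n) = x k) (i : ℤ) (m : ℕ) :
    ∃ K, (List.ofFn fun t : Fin m => x (i + t)) <:+: rep (W x n 0) K := by
  set j : ℕ := ((i % n : ℤ)).toNat with hj
  have hj0 : 0 ≤ (i % n : ℤ) := Int.emod_nonneg i (by exact_mod_cast hn.ne')
  have hjn : (i % n : ℤ) < n := Int.emod_lt_of_pos i (by exact_mod_cast hn)
  refine ⟨j + m + 1, ?_⟩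
  have hlen : (rep (W x n 0) (j + m + 1)).length = (j + m + 1) * n := by simp
  have hword : (List.ofFn fun t : Fin m => x (i + t))
      = ((rep (W x n 0) (j + m + 1)).drop j).take m := by
    apply List.ext_getElem
    · simp only [List.length_ofFn, List.length_take, List.length_drop, hlen]
      have : 1 ≤ n := hn
      have hle : j + m ≤ (j + m + 1) * n := by nlinarith
      omega
    intro q hq hq2
    have hqm : q < m := by simpa using hq
    rw [List.getElem_take, List.getElem_drop]
    rw [rep_W_getElem hn hper (j + m + 1) (j + q) (by rw [hlen]; nlinarith)]
    simp only [List.getElem_ofFn]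
    push_cast
    -- x (i + q) = x (j + q)
    have hper2 := per_int hper ((j : ℤ) + q) (i / n)
    have hiq : (i : ℤ) + q = ((j : ℤ) + q) + (i / n) * n := by
      have := Int.emod_add_mul_ediv i n
      have hjz : (j : ℤ) = i % n := Int.toNat_of_nonneg hj0
      rw [hjz]
      rw [mul_comm] at this
      omega
    rw [hiq, hper2]
  rw [hword]
  exact ((List.take_prefix ..).isInfix).trans ((List.drop_suffix ..).isInfix)

/-- Criterion for membership in the Motzkin shift via powers of the window. -/
lemma valid_of_rep (hn : 0 < n) (hper : ∀ k : ℤ, x (k + n) = x k)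
    (H : ∀ K, red M N (rep (W x n 0) K) ≠ none) : inMotzkinShift M N x := by
  intro i m
  obtain ⟨K, hK⟩ := factor_infix_rep hn hper i m
  exact red_ne_none_of_infix hK (H K)

/-- Shifting preserves membership in the Motzkin shift. -/
lemma valid_shift {c : ℤ} (hx : inMotzkinShift M N x) :
    inMotzkinShift M N (fun t => x (t + c)) := by
  intro i m
  have h : (List.ofFn fun t : Fin m => x (i + t + c))
      = (List.ofFn fun t : Fin m => x ((i + c) + t)) := by
    apply List.ext_getElem
    · simp
    · intro q hq hq2
      simp only [List.getElem_ofFn]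
      congr 1
      ring
  have h2 := hx (i + c) m
  simpa [h] using h2

/-- Reverse-swap preserves membership in the Motzkin shift. -/
lemma valid_revswap (hx : inMotzkinShift M N x) :
    inMotzkinShift M N (fun t => swapL (x (-t))) := by
  intro i m
  have h : (List.ofFn fun t : Fin m => swapL (x (-(i + t))))
      = ((List.ofFn fun t : Fin m => x ((-i - m + 1) + t)).map swapL).reverse := by
    apply List.ext_getElem
    · simp
    intro q hq hq2
    have hqm : q < m := by simpa using hq
    rw [List.getElem_reverse]
    simp only [List.getElem_map, List.getElem_ofFn, List.length_map, List.length_ofFn]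
    congr 2
    omega
  rw [h, red_reverse_swap]
  simp only [ne_eq, invol_eq_none_iff]
  exact hx (-i - m + 1) m

end Periodic

end MotzkinProof
namespace MotzkinProof
open MotzkinPaper

variable {M N : ℕ}

section Cyc

variable {w : List (Letter M N)}

/-- The periodic bi-infinite sequence with base word `w`. -/
def cyc (w : List (Letter M N)) (hw : 0 < w.length) : ℤ → Letter M N :=
  fun t => w[(t % w.length).toNat]'(by
    have hne : (w.length : ℤ) ≠ 0 := by exact_mod_cast hw.ne'
    have h0 : 0 ≤ t % (w.length : ℤ) := Int.emod_nonneg t hne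
    have h1 : t % (w.length : ℤ) < w.length := Int.emod_lt_of_pos t (by exact_mod_cast hw)
    omega)

lemma cyc_per (hw : 0 < w.length) (t : ℤ) : cyc w hw (t + w.length) = cyc w hw t := by
  unfold cyc
  congr 1
  simp [Int.add_emod_right]

lemma cyc_eq (hw : 0 < w.length) (s : ℤ)
    (h : (s % (w.length : ℤ)).toNat < w.length) :
    cyc w hw s = w[(s % (w.length : ℤ)).toNat]'h := rfl

lemma cyc_getElem (hw : 0 < w.length) (s : ℤ) (h0 : 0 ≤ s) (h1 : s < w.length) :
    cyc w hw s = w[s.toNat]'(by omega) := by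
  unfold cyc
  congr 1
  rw [Int.emod_eq_of_lt h0 h1]

lemma W_cyc (hw : 0 < w.length) : W (cyc w hw) w.length 0 = w := by
  apply List.ext_getElem
  · simp
  intro q hq hq2
  rw [W_getElem]
  rw [zero_add]
  rw [cyc_getElem hw q (by positivity) (by exact_mod_cast hq2)]
  simp

lemma cyc_valid (hw : 0 < w.length) (H : ∀ K, red M N (rep w K) ≠ none) :
    inMotzkinShift M N (cyc w hw) := by
  have hper : ∀ k : ℤ, cyc w hw (k + w.length) = cyc w hw k := cyc_per hw
  apply valid_of_rep (n := w.length) hw hper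
  rw [W_cyc hw]
  exact H

/-- The periodic sequence with base word `w` anchored at position `k`. -/
def build (w : List (Letter M N)) (hw : 0 < w.length) (k : ℤ) : ℤ → Letter M N :=
  fun t => cyc w hw (t + -k)

lemma build_per (hw : 0 < w.length) (k : ℤ) (t : ℤ) :
    build w hw k (t + w.length) = build w hw k t := by
  unfold build
  rw [show t + (w.length : ℤ) + -k = (t + -k) + w.length by ring, cyc_per]

lemma build_valid (hw : 0 < w.length) (k : ℤ) (H : ∀ K, red M N (rep w K) ≠ none) :
    inMotzkinShift M N (build w hw k) :=
  valid_shift (cyc_valid hw H)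

/-- Every `n`-periodic point equals `build` of any of its windows. -/
lemma per_eq_build {n : ℕ} {x : ℤ → Letter M N} (hn : 0 < n)
    (hper : ∀ k : ℤ, x (k + n) = x k) (k : ℤ) :
    x = build (W x n k) (by simp [hn]) k := by
  funext t
  have hWlen : (W x n k).length = n := W_length
  have hne : (n : ℤ) ≠ 0 := by exact_mod_cast hn.ne'
  have h0 : 0 ≤ (t + -k) % (n : ℤ) := Int.emod_nonneg _ hne
  show x t = cyc (W x n k) _ (t + -k)
  unfold cyc
  rw [W_getElem]
  have harg : ((((t + -k) % ((W x n k).length : ℤ)).toNat : ℕ) : ℤ) = (t - k) % (n : ℤ) := by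
    rw [hWlen]
    rw [Int.toNat_of_nonneg h0]
    ring_nf
  rw [harg]
  exact per_eq_of_window hn hper t k

end Cyc

section Lower

/-- The lower-bound construction: a periodic point realizing the shape word `c`. -/
noncomputable def Phi (hM : 1 ≤ M) {n : ℕ} (hn : 0 < n) (c : Fin n → AA M N) :
    ℤ → Letter M N :=
  build (realize ⟨0, hM⟩ N []
      (rot (List.ofFn c) (exists_good_rot (List.ofFn c)).choose))
    (by rw [realize_length, rot_length, List.length_ofFn]; exact hn)
    ((exists_good_rot (List.ofFn c)).choose : ℤ)

lemma Phi_spec (hM : 1 ≤ M) {n : ℕ} (hn : 0 < n) (c : Fin n → AA M N) :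
    (∀ t : ℤ, Phi hM hn c (t + n) = Phi hM hn c t) ∧ inMotzkinShift M N (Phi hM hn c) := by
  obtain ⟨hkle, hkmin⟩ := (exists_good_rot (List.ofFn c)).choose_spec
  set v : List (AA M N) := List.ofFn c with hv
  set k := (exists_good_rot v).choose with hk
  set w := realize (⟨0, hM⟩ : Fin M) N [] (rot v k) with hw
  have hvlen : v.length = n := by simp [hv]
  have hwlen : w.length = n := by rw [hw, realize_length, rot_length, hvlen]
  have hwpos : 0 < w.length := by omega
  have hrep : ∀ K, red M N (rep w K) ≠ none := by
    rcases le_or_gt 0 (Sw v) with hS | hS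
    · have hpre : ∀ j, 0 ≤ (([] : List (Fin M)).length : ℤ) + Sw ((rot v k).take j) := by
        intro j
        have h1 := hkmin j
        have h2 : min 0 (Sw v) = 0 := by omega
        simp only [List.length_nil, Nat.cast_zero, zero_add]
        omega
      obtain ⟨l, hl⟩ := realize_L (⟨0, hM⟩ : Fin M) (rot v k) [] [] hpre
      have hred : red M N w = some ([], l) := hl
      intro K
      obtain ⟨l', hl'⟩ := red_rep_L hred K
      rw [hl']
      simp
    · have hsuf : ∀ j, Sw ((rot v k).drop j) ≤ 0 := by
        intro j
        have h1 := hkmin j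
        have h2 : Sw ((rot v k).drop j) = Sw (rot v k) - Sw ((rot v k).take j) :=
          Sw_take_drop ..
        rw [Sw_rot] at h2
        have h3 : min 0 (Sw v) = Sw v := by omega
        omega
      obtain ⟨r, hr⟩ := realize_R (⟨0, hM⟩ : Fin M) (rot v k) [] [] hsuf
        (by rw [Sw_rot]; simp; omega)
      have hred : red M N w = some (r, []) := hr
      intro K
      obtain ⟨r', hr'⟩ := red_rep_R hred K
      rw [hr']
      simp
  constructor
  · intro t
    show build w hwpos (k : ℤ) (t + n) = build w hwpos (k : ℤ) t
    have hb := build_per hwpos (k : ℤ) t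
    rw [show ((w.length : ℕ) : ℤ) = (n : ℤ) from by exact_mod_cast hwlen] at hb
    exact hb
  · exact build_valid hwpos (k : ℤ) hrep

lemma Phi_recover (hM : 1 ≤ M) {n : ℕ} (hn : 0 < n) (c : Fin n → AA M N) (j : Fin n) :
    sh (Phi hM hn c (j : ℤ)) = c j := by
  obtain ⟨hkle, hkmin⟩ := (exists_good_rot (List.ofFn c)).choose_spec
  set v : List (AA M N) := List.ofFn c with hv
  set k := (exists_good_rot v).choose with hk
  set w := realize (⟨0, hM⟩ : Fin M) N [] (rot v k) with hw
  have hvlen : v.length = n := by simp [hv]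
  have hwlen : w.length = n := by rw [hw, realize_length, rot_length, hvlen]
  have hwpos : 0 < w.length := by omega
  have hne : (w.length : ℤ) ≠ 0 := by exact_mod_cast hwpos.ne'
  set p : ℕ := (((j : ℤ) + -(k : ℤ)) % (w.length : ℤ)).toNat with hp
  have hmod0 : 0 ≤ ((j : ℤ) + -(k : ℤ)) % (w.length : ℤ) := Int.emod_nonneg _ hne
  have hmodlt : ((j : ℤ) + -(k : ℤ)) % (w.length : ℤ) < w.length :=
    Int.emod_lt_of_pos _ (by exact_mod_cast hwpos)
  have hpn : p < n := by omega
  have hPhi : Phi hM hn c (j : ℤ) = w[p]'(by omega) :=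
    cyc_eq hwpos ((j : ℤ) + -(k : ℤ)) (by omega)
  rw [hPhi]
  have hsh : sh (w[p]'(by omega)) = (rot v k)[p]'(by rw [rot_length, hvlen]; omega) := by
    rw [← List.getElem_map (f := sh) (h := by rw [List.length_map]; omega)]
    exact List.getElem_of_eq (map_sh_realize (⟨0, hM⟩ : Fin M) (rot v k) []) _
  rw [hsh]
  rw [rot_getElem v k p (by omega) (by omega)]
  have hidx : (p + k) % v.length = (j : ℕ) := by
    have hpz : (p : ℤ) = ((j : ℤ) - k) % (n : ℤ) := by
      rw [hp, Int.toNat_of_nonneg hmod0, hwlen]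
      ring_nf
    have hcast : ((p + k : ℕ) : ℤ) % (n : ℤ) = (j : ℤ) := by
      push_cast
      rw [hpz]
      rw [Int.emod_def (((j : ℤ) - k)) (n : ℤ)]
      rw [show (j : ℤ) - ↑k - ↑n * ((↑j - ↑k) / ↑n) + ↑k
          = (j : ℤ) + (-(((j : ℤ) - ↑k) / ↑n)) * ↑n by ring]
      rw [Int.add_mul_emod_self_right]
      exact Int.emod_eq_of_lt (by positivity) (by exact_mod_cast j.isLt)
    have h2 : ((p + k) % v.length : ℕ) = (((p + k : ℕ) : ℤ) % (n : ℤ)).toNat := by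
      rw [hvlen]
      omega
    rw [h2, hcast]
    simp
  have h3 : v[(p + k) % v.length]'(Nat.mod_lt _ (by omega)) = v[(j : ℕ)]'(by omega) := by
    congr 1
  rw [h3]
  simp [hv]

lemma Phi_injective (hM : 1 ≤ M) {n : ℕ} (hn : 0 < n) :
    Function.Injective (Phi (M := M) (N := N) hM hn) := by
  intro c c' h
  funext j
  have h1 := Phi_recover hM hn c j
  have h2 := Phi_recover hM hn c' j
  rw [h] at h1
  rw [← h1]
  exact h2

end Lower

end MotzkinProof
namespace MotzkinProof
open MotzkinPaper

variable {M N : ℕ}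

section Upper

lemma map_rot (f : α → β) (u : List α) (k : ℕ) :
    (rot u k).map f = rot (u.map f) k := by
  simp [rot, List.map_take, List.map_drop]

lemma rot_mod {v : List α} {k : ℕ} (hk : k ≤ v.length) (hv : 0 < v.length) :
    rot v (k % v.length) = rot v k := by
  rcases eq_or_lt_of_le hk with h | h
  · subst h
    rw [Nat.mod_self]
    simp [rot]
  · rw [Nat.mod_eq_of_lt h]

/-- The reverse-swap involution adapted to period `n`. -/
def psi (n : ℕ) (x : ℤ → Letter M N) : ℤ → Letter M N :=
  fun t => swapL (x ((n : ℤ) - 1 - t))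

lemma psi_psi (n : ℕ) (x : ℤ → Letter M N) : psi n (psi n x) = x := by
  funext t
  show swapL (swapL (x ((n : ℤ) - 1 - ((n : ℤ) - 1 - t)))) = x t
  rw [swapL_swapL]
  congr 1
  ring

lemma psi_per {n : ℕ} {x : ℤ → Letter M N} (hper : ∀ k : ℤ, x (k + n) = x k) (t : ℤ) :
    psi n x (t + n) = psi n x t := by
  show swapL (x ((n : ℤ) - 1 - (t + n))) = swapL (x ((n : ℤ) - 1 - t))
  congr 1
  have := hper ((n : ℤ) - 1 - t - n)
  rw [show (n : ℤ) - 1 - t - n + n = (n : ℤ) - 1 - t by ring] at this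
  rw [show (n : ℤ) - 1 - (t + n) = (n : ℤ) - 1 - t - n by ring]
  exact this.symm

lemma psi_valid {n : ℕ} {x : ℤ → Letter M N} (hx : inMotzkinShift M N x) :
    inMotzkinShift M N (psi n x) := by
  have h1 : inMotzkinShift M N (fun t => swapL (x (-t))) := valid_revswap hx
  have h2 : inMotzkinShift M N (fun t => swapL (x (-(t + -((n : ℤ) - 1))))) :=
    valid_shift (c := -((n : ℤ) - 1)) h1
  have h3 : psi n x = fun t => swapL (x (-(t + -((n : ℤ) - 1)))) := by
    funext t
    show swapL (x ((n : ℤ) - 1 - t)) = _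
    congr 1
    ring
  rw [h3]
  exact h2

lemma W_psi {n : ℕ} {x : ℤ → Letter M N} (hn : 0 < n) :
    W (psi n x) n 0 = ((W x n 0).map swapL).reverse := by
  apply List.ext_getElem
  · simp
  intro q hq hq2
  have hqn : q < n := by simpa using hq
  rw [W_getElem, List.getElem_reverse, List.getElem_map, W_getElem]
  show swapL (x ((n:ℤ) - 1 - (0 + (q : ℤ)))) = _
  congr 2
  simp only [List.length_map, W_length]
  omega

lemma wt_sh_swapL (a : Letter M N) : wt (sh (swapL a)) = - wt (sh a) := by
  cases a <;> simp [swapL, sh, wt]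

lemma Sw_sh_revswap (w : List (Letter M N)) :
    Sw (((w.map swapL).reverse).map sh) = - Sw (w.map sh) := by
  induction w with
  | nil => simp
  | cons a w ih =>
    have h1 : ((a :: w).map swapL).reverse = (w.map swapL).reverse ++ [swapL a] := by simp
    rw [h1, List.map_append, Sw_append, ih]
    simp [wt_sh_swapL]

lemma Sw_psi {n : ℕ} {x : ℤ → Letter M N} (hn : 0 < n) :
    Sw ((W (psi n x) n 0).map sh) = - Sw ((W x n 0).map sh) := by
  rw [W_psi hn, Sw_sh_revswap]

/-- Rotation anchor used for the encoding. -/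
noncomputable def encK {n : ℕ} (hn : 0 < n) (x : ℤ → Letter M N) : Fin n :=
  ⟨(exists_good_rot ((W x n 0).map sh)).choose % n, Nat.mod_lt _ hn⟩

/-- Shape encoding of a periodic point. -/
noncomputable def encC {n : ℕ} (hn : 0 < n) (x : ℤ → Letter M N) : Fin n → AA M N :=
  fun j => (rot ((W x n 0).map sh) (encK hn x))[(j : ℕ)]'(by
    rw [rot_length, List.length_map, W_length]; exact j.isLt)

/-- Decoding of the pair (anchor, shape word). -/
noncomputable def decode (hM : 1 ≤ M) {n : ℕ} (hn : 0 < n) (k : Fin n)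
    (c : Fin n → AA M N) : ℤ → Letter M N :=
  build (realize ⟨0, hM⟩ N [] (List.ofFn c))
    (by rw [realize_length, List.length_ofFn]; exact hn) (((k : ℕ) : ℤ))

lemma build_congr {w w' : List (Letter M N)} (h : w = w') (hw : 0 < w.length)
    (hw' : 0 < w'.length) (k : ℤ) : build w hw k = build w' hw' k := by
  subst h
  rfl

/-- Reconstruction of a nonnegative-drift periodic point from its encoding. -/
lemma recon_eq (hM : 1 ≤ M) {n : ℕ} (hn : 0 < n) {x : ℤ → Letter M N}
    (hx : inMotzkinShift M N x) (hper : ∀ k : ℤ, x (k + n) = x k)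
    (hS : 0 ≤ Sw ((W x n 0).map sh)) :
    x = decode hM hn (encK hn x) (encC hn x) := by
  obtain ⟨hkle, hkmin⟩ := (exists_good_rot ((W x n 0).map sh)).choose_spec
  set vx : List (AA M N) := (W x n 0).map sh with hvx
  set k0 := (exists_good_rot vx).choose with hk0
  have hvxlen : vx.length = n := by rw [hvx, List.length_map, W_length]
  set k := k0 % n with hkdef
  have hkn : k < n := Nat.mod_lt _ hn
  have hkval : ((encK hn x : Fin n) : ℕ) = k := rfl
  have hrot : rot vx k = rot vx k0 := by
    rw [hkdef, ← hvxlen]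
    exact rot_mod (by omega) (by omega)
  have hWk : W x n (k : ℤ) = rot (W x n 0) k := W_rot hn hper k (by omega)
  have hmapsh : (W x n (k : ℤ)).map sh = rot vx k := by
    rw [hWk, map_rot, hvx]
  have hmin0 : min 0 (Sw vx) = 0 := by omega
  have hpre : ∀ j, 0 ≤ (([] : List (Fin M)).length : ℤ)
      + Sw (((W x n (k : ℤ)).map sh).take j) := by
    intro j
    rw [hmapsh, hrot]
    have := hkmin j
    simp only [List.length_nil, Nat.cast_zero, zero_add]
    omega
  have hredne : F M N (some ([], [])) (W x n (k : ℤ)) ≠ none := hx (k : ℤ) n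
  have hrecon : W x n (k : ℤ) = realize ⟨0, hM⟩ N [] ((W x n (k : ℤ)).map sh) :=
    recon_L _ _ [] [] hredne hpre
  have hofn : List.ofFn (encC hn x) = rot vx k := by
    apply List.ext_getElem
    · rw [List.length_ofFn, rot_length, hvxlen]
    intro q hq hq2
    rw [List.getElem_ofFn]
    rfl
  have hw : realize (⟨0, hM⟩ : Fin M) N [] (List.ofFn (encC hn x)) = W x n (k : ℤ) := by
    rw [hofn, ← hmapsh, ← hrecon]
  have hbuild := per_eq_build hn hper (k : ℤ)
  have hdec : decode hM hn (encK hn x) (encC hn x)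
      = build (W x n (k : ℤ)) (by rw [W_length]; exact hn) (k : ℤ) := by
    show build (realize (⟨0, hM⟩ : Fin M) N [] (List.ofFn (encC hn x))) _
        (((encK hn x : ℕ) : ℤ)) = _
    rw [hkval]
    exact build_congr hw _ _ _
  rw [hdec]
  exact hbuild

end Upper

end MotzkinProof
namespace MotzkinProof
open MotzkinPaper

variable {M N : ℕ}

/-- The letters inject into a finite sum. -/
def letterToSum : Letter M N → (Fin M ⊕ Fin M ⊕ Fin N)
  | .lam i => .inl i
  | .rho i => .inr (.inl i)
  | .neu j => .inr (.inr j)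

lemma letterToSum_injective : Function.Injective (letterToSum (M := M) (N := N)) := by
  intro a b h
  cases a <;> cases b <;> simp [letterToSum] at h <;> simp [h]

instance : Finite (Letter M N) := Finite.of_injective _ letterToSum_injective

section Count

variable {n : ℕ}

/-- The subtype of `n`-periodic points of the Motzkin shift. -/
abbrev Sub (M N n : ℕ) : Type :=
  {x : ℤ → Letter M N // inMotzkinShift M N x ∧ ∀ k : ℤ, x (k + (n : ℤ)) = x k}

lemma win_injective (hn : 0 < n) :
    Function.Injective (fun (x : Sub M N n) => (fun j : Fin n => x.1 (j : ℤ))) := by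
  intro x x' h
  apply Subtype.ext
  funext t
  have hne : (n : ℤ) ≠ 0 := by exact_mod_cast hn.ne'
  have h0 : 0 ≤ (t - 0) % (n : ℤ) := Int.emod_nonneg _ hne
  have h1 : (t - 0) % (n : ℤ) < n := Int.emod_lt_of_pos _ (by exact_mod_cast hn)
  have e1 := per_eq_of_window hn x.2.2 t 0
  have e2 := per_eq_of_window hn x'.2.2 t 0
  rw [e1, e2]
  have := congrFun h (⟨((t - 0) % (n : ℤ)).toNat, by omega⟩ : Fin n)
  simp only at this
  have hcast : ((((t - 0) % (n : ℤ)).toNat : ℕ) : ℤ) = (t - 0) % (n : ℤ) :=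
    Int.toNat_of_nonneg h0
  rw [← hcast, zero_add]
  exact this

theorem sub_finite (hn : 0 < n) : Finite (Sub M N n) :=
  Finite.of_injective _ (win_injective hn)

lemma card_AA : Nat.card (AA M N) = M + N + 1 := by
  simp [Nat.card_eq_fintype_card]
  omega

lemma card_fun_AA (n : ℕ) : Nat.card (Fin n → AA M N) = (M + N + 1) ^ n := by
  rw [Nat.card_eq_fintype_card, Fintype.card_fun]
  congr 1
  · simp
    omega
  · simp

lemma card_lower (hM : 1 ≤ M) (hn : 0 < n) : (M + N + 1) ^ n ≤ p M N n := by
  have := sub_finite (M := M) (N := N) hn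
  have hinj : Function.Injective (fun c : Fin n → AA M N =>
      (⟨Phi hM hn c, (Phi_spec hM hn c).2, (Phi_spec hM hn c).1⟩ : Sub M N n)) := by
    intro c c' h
    exact Phi_injective hM hn (congrArg Subtype.val h)
  have hcard := Nat.card_le_card_of_injective _ hinj
  rw [card_fun_AA] at hcard
  exact hcard

lemma card_upper (hM : 1 ≤ M) (hn : 0 < n) :
    p M N n ≤ 2 * (n * (M + N + 1) ^ n) := by
  classical
  have := sub_finite (M := M) (N := N) hn
  set g : Sub M N n → Bool × Fin n × (Fin n → AA M N) := fun x =>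
    if 0 ≤ Sw ((W x.1 n 0).map sh) then (true, encK hn x.1, encC hn x.1)
    else (false, encK hn (psi n x.1), encC hn (psi n x.1)) with hg
  have hginj : Function.Injective g := by
    intro x x' h
    by_cases hS : 0 ≤ Sw ((W x.1 n 0).map sh) <;>
      by_cases hS' : 0 ≤ Sw ((W x'.1 n 0).map sh)
    · rw [hg] at h
      simp only [if_pos hS, if_pos hS'] at h
      have h1 : encK hn x.1 = encK hn x'.1 := by
        have := congrArg (fun z => z.2.1) h
        simpa using this
      have h2 : encC hn x.1 = encC hn x'.1 := by
        have := congrArg (fun z => z.2.2) h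
        simpa using this
      have r1 := recon_eq hM hn x.2.1 x.2.2 hS
      have r2 := recon_eq hM hn x'.2.1 x'.2.2 hS'
      apply Subtype.ext
      rw [r1, r2, h1, h2]
    · exfalso
      rw [hg] at h
      simp only [if_pos hS, if_neg hS'] at h
      exact Bool.noConfusion (congrArg Prod.fst h)
    · exfalso
      rw [hg] at h
      simp only [if_neg hS, if_pos hS'] at h
      exact Bool.noConfusion (congrArg Prod.fst h)
    · rw [hg] at h
      simp only [if_neg hS, if_neg hS'] at h
      have h1 : encK hn (psi n x.1) = encK hn (psi n x'.1) := by
        have := congrArg (fun z => z.2.1) h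
        simpa using this
      have h2 : encC hn (psi n x.1) = encC hn (psi n x'.1) := by
        have := congrArg (fun z => z.2.2) h
        simpa using this
      have hSp : 0 ≤ Sw ((W (psi n x.1) n 0).map sh) := by
        rw [Sw_psi hn]
        omega
      have hSp' : 0 ≤ Sw ((W (psi n x'.1) n 0).map sh) := by
        rw [Sw_psi hn]
        omega
      have r1 := recon_eq hM hn (psi_valid x.2.1) (psi_per x.2.2) hSp
      have r2 := recon_eq hM hn (psi_valid x'.2.1) (psi_per x'.2.2) hSp'
      have : psi n x.1 = psi n x'.1 := by
        rw [r1, r2, h1, h2]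
      apply Subtype.ext
      have := congrArg (psi n) this
      rwa [psi_psi, psi_psi] at this
  have hcard := Nat.card_le_card_of_injective _ hginj
  have htarget : Nat.card (Bool × Fin n × (Fin n → AA M N)) = 2 * (n * (M + N + 1) ^ n) := by
    rw [Nat.card_prod, Nat.card_prod, card_fun_AA]
    simp [Nat.card_eq_fintype_card]
  rw [htarget] at hcard
  exact hcard

end Count

end MotzkinProof
namespace MotzkinProof
open MotzkinPaper Filter

lemma log_two_n_div_n_tendsto :
    Tendsto (fun n : ℕ => Real.log (2 * n) / n) atTop (nhds 0) := by
  have h1 : Tendsto (fun x : ℝ => Real.log x / x) atTop (nhds 0) :=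
    Real.isLittleO_log_id_atTop.tendsto_div_nhds_zero
  have h2 : Tendsto (fun n : ℕ => (2 * n : ℝ)) atTop atTop :=
    (tendsto_natCast_atTop_atTop).const_mul_atTop two_pos
  have h3 := (h1.comp h2).mul_const 2
  rw [zero_mul] at h3
  have heq : (fun n : ℕ => Real.log (2 * n) / (2 * n) * 2)
      = fun n : ℕ => Real.log (2 * n) / n := by
    funext n
    rcases eq_or_ne (n : ℝ) 0 with h | h
    · rw [h]; simp
    · field_simp
  rw [← heq]
  exact h3

theorem motzkin_entropy_aux (M N : ℕ) (hM : 1 ≤ M) :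
    Tendsto (fun n : ℕ => Real.log (p M N n) / n) atTop
      (nhds (Real.log (M + N + 1))) := by
  set T : ℝ := (M : ℝ) + N + 1 with hT
  have hT1 : (1 : ℝ) < T := by
    have : (1 : ℝ) ≤ (M : ℝ) := by exact_mod_cast hM
    have hN0 : (0 : ℝ) ≤ (N : ℝ) := by positivity
    rw [hT]; linarith
  have hT0 : (0 : ℝ) < T := by linarith
  have hcastT : ((M + N + 1 : ℕ) : ℝ) = T := by push_cast; ring
  have key : ∀ n : ℕ, 1 ≤ n →
      (Real.log T ≤ Real.log (p M N n) / n ∧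
       Real.log (p M N n) / n ≤ Real.log (2 * n) / n + Real.log T) := by
    intro n hn
    have hn0 : (0 : ℝ) < n := by exact_mod_cast hn
    have hl : T ^ n ≤ (p M N n : ℝ) := by
      have := card_lower (N := N) hM (by omega : 0 < n)
      have hc : (((M + N + 1) ^ n : ℕ) : ℝ) ≤ (p M N n : ℝ) := by exact_mod_cast this
      rw [Nat.cast_pow, hcastT] at hc
      exact hc
    have hu : (p M N n : ℝ) ≤ 2 * n * T ^ n := by
      have := card_upper (N := N) hM (by omega : 0 < n)
      have hc : ((p M N n : ℕ) : ℝ) ≤ ((2 * (n * (M + N + 1) ^ n) : ℕ) : ℝ) := by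
        exact_mod_cast this
      rw [Nat.cast_mul, Nat.cast_mul, Nat.cast_pow, hcastT] at hc
      push_cast at hc
      rw [show (2 : ℝ) * n * T ^ n = 2 * ((n : ℝ) * T ^ n) by ring]
      exact hc
    have hppos : (0 : ℝ) < (p M N n : ℝ) := lt_of_lt_of_le (by positivity) hl
    constructor
    · have h1 : Real.log (T ^ n) ≤ Real.log (p M N n) :=
        Real.log_le_log (by positivity) hl
      rw [Real.log_pow] at h1
      rw [le_div_iff₀ hn0]
      calc Real.log T * n = n * Real.log T := by ring
      _ ≤ Real.log (p M N n) := h1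
    · have h2 : Real.log (p M N n) ≤ Real.log (2 * n * T ^ n) :=
        Real.log_le_log hppos hu
      have h3 : Real.log (2 * (n : ℝ) * T ^ n) = Real.log (2 * n) + n * Real.log T := by
        rw [Real.log_mul (by positivity) (by positivity), Real.log_pow]
      rw [h3] at h2
      rw [div_le_iff₀ hn0]
      calc Real.log (p M N n) ≤ Real.log (2 * n) + n * Real.log T := h2
      _ = (Real.log (2 * n) / n + Real.log T) * n := by
          field_simp
  have hlower : ∀ᶠ n : ℕ in atTop, Real.log T ≤ Real.log (p M N n) / n :=
    eventually_atTop.mpr ⟨1, fun n hn => (key n hn).1⟩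
  have hupper : ∀ᶠ n : ℕ in atTop,
      Real.log (p M N n) / n ≤ Real.log (2 * n) / n + Real.log T :=
    eventually_atTop.mpr ⟨1, fun n hn => (key n hn).2⟩
  have hUlim : Tendsto (fun n : ℕ => Real.log (2 * n) / n + Real.log T) atTop
      (nhds (Real.log T)) := by
    have := log_two_n_div_n_tendsto.add_const (Real.log T)
    rwa [zero_add] at this
  have hmain := tendsto_of_tendsto_of_tendsto_of_le_of_le'
    (tendsto_const_nhds : Tendsto (fun _ : ℕ => Real.log T) atTop (nhds (Real.log T)))
    hUlim hlower hupper
  have : Real.log ((M : ℝ) + N + 1) = Real.log T := by rw [hT]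
  rw [this]
  exact hmain

end MotzkinProof

open MotzkinPaper in
/-- The topological entropy of the Motzkin shift `M(M,N)` is `log(M+N+1)`:
`lim_{n→∞} (1/n) log p_n(M(M,N)) = log(M+N+1)`. -/
theorem motzkin_entropy (M N : ℕ) (hM : 1 ≤ M) (hN : 1 ≤ N) :
    Filter.Tendsto (fun n : ℕ => Real.log (p M N n) / n) Filter.atTop
      (nhds (Real.log (M + N + 1))) := by
  exact MotzkinProof.motzkin_entropy_aux M N hM
end

section
/- For all n ≥ 1, (M+N+1)^n ≤ p_n(M(M,N)) ≤ 2·(M+N+1)^n, where p_n(M(M,N)) = ∑_{i=0}^{n−1} binom(n,i) N^i p_{n−i}(D_M) + N^n and p_m(D_M) is given by the closed Dyck shift formula. -/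
namespace MotzkinPaper

/-- The closed formula for the number of `m`-periodic points of the Dyck shift `D_M`:
`p_m(D_M) = 2{(M+1)^m − ∑_{i=0}^{⌊m/2⌋} C(m,i)Mⁱ} + [m even]·C(m,m/2)M^{m/2}`. -/
def pDyck (M m : ℕ) : ℤ :=
  2 * (((M : ℤ) + 1) ^ m - ∑ i ∈ Finset.range (m / 2 + 1), (m.choose i : ℤ) * (M : ℤ) ^ i)
    + if Even m then (m.choose (m / 2) : ℤ) * (M : ℤ) ^ (m / 2) else 0

/-- The number of `n`-periodic points of the Motzkin shift, given by
`p_n(M(M,N)) = ∑_{i=0}^{n−1} C(n,i) Nⁱ p_{n−i}(D_M) + Nⁿ`. -/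
def pMotzkin (M N n : ℕ) : ℤ :=
  (∑ i ∈ Finset.range n, (n.choose i : ℤ) * (N : ℤ) ^ i * pDyck M (n - i)) + (N : ℤ) ^ n

end MotzkinPaper

/-!
The binomial expansion of `(M+1)^m` splits into a lower half `i ≤ m/2` and an upper half
`i ≥ m/2`, sharing the middle term `c` when `m` is even. Reflecting `i ↦ m - i` and using
`Mⁱ ≤ M^{m-i}` shows that the lower half `L` is at most the upper half `U`, and the Dyck formula
equals `2U - c`. Hence `(M+1)^m = L + U - c ≤ p_m(D_M) ≤ 2 (L + U - c)`, the last step because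
`c` is one of the terms of `L`. Adjoining the term
`p_0(D_M) = 1`, the Motzkin formula is a binomial expansion of `(N + (M+1))ⁿ` with each
`(M+1)^k` replaced by `p_k(D_M)`, so the bounds pass through termwise.
-/

open Finset

theorem Finset.sum_range_half_succ {A : Type*} [AddCommMonoid A] (f : ℕ → A) (m : ℕ) :
    ∑ i ∈ range (m / 2 + 1), f i
      = ∑ i ∈ range ((m + 1) / 2), f i + if Even m then f (m / 2) else 0 := by
  split_ifs with hm
  · obtain ⟨k, rfl⟩ := hm
    rw [sum_range_succ, show (k + k + 1) / 2 = (k + k) / 2 by omega]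
  · rw [Nat.not_even_iff_odd] at hm
    obtain ⟨k, rfl⟩ := hm
    rw [add_zero, show (2 * k + 1 + 1) / 2 = (2 * k + 1) / 2 + 1 by omega]

theorem sum_range_half_choose_mul_pow_le_sum_Ico {R : Type*} [CommSemiring R] [PartialOrder R]
    [IsOrderedRing R] {x : R} (hx : 1 ≤ x) (m : ℕ) :
    ∑ i ∈ range (m / 2 + 1), (m.choose i : R) * x ^ i
      ≤ ∑ i ∈ Ico ((m + 1) / 2) (m + 1), (m.choose i : R) * x ^ i := by
  have hreflect := sum_Ico_reflect (fun i => (m.choose i : R) * x ^ i) 0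
    (show m / 2 + 1 ≤ m + 1 by omega)
  rw [Nat.Ico_zero_eq_range, show m + 1 - (m / 2 + 1) = (m + 1) / 2 by omega,
    Nat.sub_zero] at hreflect
  rw [← hreflect]
  refine sum_le_sum fun i hi => ?_
  have hi : i ≤ m - i := by rw [mem_range] at hi; omega
  rw [Nat.choose_symm (hi.trans (Nat.sub_le m i))]
  gcongr

namespace MotzkinPaper

theorem pDyck_zero (M : ℕ) : pDyck M 0 = 1 := by
  simp [pDyck]

theorem pDyck_bounds {M : ℕ} (hM : 1 ≤ M) (m : ℕ) :
    ((M : ℤ) + 1) ^ m ≤ pDyck M m ∧ pDyck M m ≤ 2 * ((M : ℤ) + 1) ^ m := by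
  set f : ℕ → ℤ := fun i => (m.choose i : ℤ) * (M : ℤ) ^ i
  have hbinom : ∑ i ∈ range (m + 1), f i = ((M : ℤ) + 1) ^ m := by
    simp [f, add_pow, mul_comm]
  have hsplit := sum_range_add_sum_Ico f (show (m + 1) / 2 ≤ m + 1 by omega)
  have hhalf := sum_range_half_succ f m
  have hlow_le_up :=
    sum_range_half_choose_mul_pow_le_sum_Ico (x := (M : ℤ)) (by exact_mod_cast hM) m
  have hlow_nonneg : 0 ≤ ∑ i ∈ range ((m + 1) / 2), f i := sum_nonneg fun i _ => by positivity
  have hmid_nonneg : 0 ≤ if Even m then f (m / 2) else 0 := by split_ifs <;> positivity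
  unfold pDyck
  constructor <;> linarith

theorem pMotzkin_eq_sum (M N n : ℕ) :
    pMotzkin M N n = ∑ i ∈ range (n + 1), (n.choose i : ℤ) * (N : ℤ) ^ i * pDyck M (n - i) := by
  simp [pMotzkin, sum_range_succ, pDyck_zero]

end MotzkinPaper

open MotzkinPaper in
theorem motzkin_periodic_point_bounds_general (M N n : ℕ) (hM : 1 ≤ M) :
    ((M : ℤ) + N + 1) ^ n ≤ pMotzkin M N n ∧
      pMotzkin M N n ≤ 2 * ((M : ℤ) + N + 1) ^ n := by
  have hbinom : ((M : ℤ) + N + 1) ^ n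
      = ∑ i ∈ range (n + 1), (n.choose i : ℤ) * (N : ℤ) ^ i * ((M : ℤ) + 1) ^ (n - i) := by
    rw [show (M : ℤ) + N + 1 = N + (M + 1) by ring, add_pow]
    exact sum_congr rfl fun i _ => by ring
  rw [pMotzkin_eq_sum, hbinom, mul_sum]
  constructor <;> refine sum_le_sum fun i _ => ?_
  · gcongr
    exact (pDyck_bounds hM (n - i)).1
  · rw [mul_left_comm]
    gcongr
    exact (pDyck_bounds hM (n - i)).2

open MotzkinPaper in
/-- For all `n ≥ 1`, `(M+N+1)ⁿ ≤ p_n(M(M,N)) ≤ 2·(M+N+1)ⁿ`. -/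
theorem motzkin_periodic_point_bounds (M N n : ℕ) (hM : 1 ≤ M) (hN : 1 ≤ N) (hn : 1 ≤ n) :
    ((M : ℤ) + N + 1) ^ n ≤ pMotzkin M N n ∧
      pMotzkin M N n ≤ 2 * ((M : ℤ) + N + 1) ^ n :=
  motzkin_periodic_point_bounds_general M N n hM
end

section
/- For the subshift X(M) defined by the monoid M_1(M) (one left bracket λ matching ρ_1,…,ρ_M and one left bracket ξ matching η_1,…,η_M), the generating function of the code E of words λ v ρ_i or ξ v η_i with red(v)=1 coincides with that of the Dyck shift D_{2M}: f(E,z) = (1/2)(1 − √(1 − 8Mz^2)) as formal power series. -/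
open PowerSeries

namespace XShift

/-- The alphabet `Σ₁ = {λ, ξ, ρ₁,…,ρ_M, η₁,…,η_M}` of the subshift `X(M)`. -/
inductive Letter1 (M : ℕ) : Type where
  | lam
  | xi
  | rho (i : Fin M)
  | eta (i : Fin M)
  deriving DecidableEq

/-- Elements of the monoid `M₁(M)`: `none` is zero; a nonzero element is a reduced
word consisting of right letters (`(false, i)` for `ρᵢ`, `(true, i)` for `ηᵢ`)
followed by left letters (`false` for `λ`, `true` for `ξ`, stored in reverse order).
`some ([], [])` is the identity. -/
abbrev El1 (M : ℕ) : Type := Option (List (Bool × Fin M) × List Bool)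

/-- The identity of `M₁(M)`. -/
def one1 (M : ℕ) : El1 M := some ([], [])

/-- Multiplication by a generator, implementing `λρᵢ = 1`, `ξηᵢ = 1`, `ληᵢ = 0`,
`ξρᵢ = 0`. -/
def step1 (M : ℕ) : El1 M → Letter1 M → El1 M
  | none, _ => none
  | some (r, l), .lam => some (r, false :: l)
  | some (r, l), .xi => some (r, true :: l)
  | some (r, l), .rho i =>
      match l with
      | [] => some (r ++ [(false, i)], [])
      | b :: t => if b = false then some (r, t) else none
  | some (r, l), .eta i =>
      match l with
      | [] => some (r ++ [(true, i)], [])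
      | b :: t => if b = true then some (r, t) else none

/-- `red1 w` is the image of a word `w` in the monoid `M₁(M)`. -/
def red1 (M : ℕ) (w : List (Letter1 M)) : El1 M := w.foldl (step1 M) (one1 M)

/-- The code `E` of `X(M)`: words `λ v ρᵢ` or `ξ v ηᵢ` with `red v = 1`. -/
def codeE1 (M : ℕ) (w : List (Letter1 M)) : Prop :=
  ∃ (i : Fin M) (v : List (Letter1 M)),
    (w = Letter1.lam :: (v ++ [Letter1.rho i]) ∨ w = Letter1.xi :: (v ++ [Letter1.eta i]))
      ∧ red1 M v = one1 M

/-- The number of length-`n` code words of `X(M)`. -/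
noncomputable def e1 (M n : ℕ) : ℕ :=
  Nat.card {w : Fin n → Letter1 M // codeE1 M (List.ofFn w)}

/-- The generating function of the code `E` of `X(M)`. -/
noncomputable def fE1 (M : ℕ) : PowerSeries ℚ := PowerSeries.mk fun n => (e1 M n : ℚ)

/-- Membership in the subshift `X(M)`: all finite subwords have nonzero reduction. -/
def inXShift (M : ℕ) (x : ℤ → Letter1 M) : Prop :=
  ∀ (i : ℤ) (m : ℕ), red1 M (List.ofFn fun k : Fin m => x (i + k)) ≠ none

/-- The number of `n`-periodic points of `X(M)`. -/
noncomputable def pX (M n : ℕ) : ℕ :=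
  Nat.card {x : ℤ → Letter1 M // inXShift M x ∧ ∀ k : ℤ, x (k + n) = x k}

/-- Cancel a (reversed) left-letter word against a right-letter word, computing the
multiplier `red(α₋α₊)` of a block with reduction `(r, l)`. -/
def cancel (M : ℕ) : List Bool → List (Bool × Fin M) →
    Option (List Bool × List (Bool × Fin M))
  | [], r => some ([], r)
  | c :: lt, [] => some (c :: lt, [])
  | c :: lt, (b, _) :: rt => if c = b then cancel M lt rt else none

/-- The multiplier of the length-`n` defining block `x₀x₁⋯x_{n−1}` of a periodic
point `x`, as an element of `M₁(M)` given by the remaining (left, right) letters. -/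
def multiplier (M n : ℕ) (x : ℤ → Letter1 M) : Option (List Bool × List (Bool × Fin M)) :=
  match red1 M (List.ofFn fun k : Fin n => x (k : ℤ)) with
  | none => none
  | some (r, l) => cancel M l r

/-- A positive-or-neutral multiplier: no left letters remain after cancellation. -/
def PosMult (M n : ℕ) (x : ℤ → Letter1 M) : Prop :=
  ∃ r', multiplier M n x = some ([], r')

/-- A negative-or-neutral multiplier: no right letters remain after cancellation. -/
def NegMult (M n : ℕ) (x : ℤ → Letter1 M) : Prop :=
  ∃ l', multiplier M n x = some (l', [])

/-- `p_n⁺(X(M))`: the number of `n`-periodic points of `X(M)` whose defining block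
has a positive or neutral multiplier. -/
noncomputable def pXpos (M n : ℕ) : ℕ :=
  Nat.card {x : ℤ → Letter1 M //
    inXShift M x ∧ (∀ k : ℤ, x (k + n) = x k) ∧ PosMult M n x}

/-- `p_n⁻(X(M))`: the number of `n`-periodic points of `X(M)` whose defining block
has a negative or neutral multiplier. -/
noncomputable def pXneg (M n : ℕ) : ℕ :=
  Nat.card {x : ℤ → Letter1 M //
    inXShift M x ∧ (∀ k : ℤ, x (k + n) = x k) ∧ NegMult M n x}

end XShift

/-!
Read the left letters `λ, ξ` as pushes and the right letters as pops of a stack of pending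
left letters. Then `red v = 1` says that `v` is well nested, and every nonempty well-nested word
factors uniquely as a code word followed by a well-nested word, by cutting where the stack
first becomes empty again. A code word of length `n + 2` is a left letter, a well-nested word of
length `n` and one of the `M` matching right letters. So the series `B` of well-nested words
satisfies `B = 1 + E B` and `E = 2M z² B`, whence `E (1 - E) = 2M z²`, i.e.
`(1 - 2E)² = 1 - 8M z²`, and the constant terms single out the root `1 - 2E = s`.
-/

section LengthSeries

open Finset

variable {α : Type*}

noncomputable def lengthCount (P : List α → Prop) (n : ℕ) : ℕ :=
  Nat.card {l : List α // l.length = n ∧ P l}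

noncomputable def lengthSeries (P : List α → Prop) : ℚ⟦X⟧ :=
  mk fun n => (lengthCount P n : ℚ)

instance [Finite α] (P : List α → Prop) (n : ℕ) :
    Finite {l : List α // l.length = n ∧ P l} :=
  ((List.finite_length_eq α n).subset fun _ hl => hl.1).to_subtype

theorem card_fin_fun_eq_lengthCount (P : List α → Prop) (n : ℕ) :
    Nat.card {w : Fin n → α // P (List.ofFn w)} = lengthCount P n := by
  refine Nat.card_congr <| ((Equiv.vectorEquivFin α n).symm.subtypeEquiv fun w => ?_).trans
    (Equiv.subtypeSubtypeEquivSubtypeInter (fun l : List α => l.length = n) P)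
  change P _ ↔ P (List.Vector.ofFn w).toList
  rw [List.Vector.toList_ofFn]

theorem lengthSeries_eq_one_add {P : List α → Prop} (h : P []) :
    lengthSeries P = 1 + lengthSeries (fun l => l ≠ [] ∧ P l) := by
  ext (_ | n) <;> simp only [lengthSeries, lengthCount, map_add, coeff_mk, coeff_one]
  · have : Unique {l : List α // l.length = 0 ∧ P l} :=
      ⟨⟨⟨[], rfl, h⟩⟩, fun l => Subtype.ext (List.length_eq_zero_iff.1 l.2.1)⟩
    have : IsEmpty {l : List α // l.length = 0 ∧ l ≠ [] ∧ P l} :=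
      ⟨fun l => l.2.2.1 (List.length_eq_zero_iff.1 l.2.1)⟩
    rw [Nat.card_unique, Nat.card_of_isEmpty]
    simp
  · rw [if_neg n.succ_ne_zero, zero_add]
    refine congrArg _ (Nat.card_congr (Equiv.subtypeEquivRight fun l => ?_))
    exact ⟨fun h' => ⟨h'.1, List.ne_nil_of_length_eq_add_one h'.1, h'.2⟩,
      fun h' => ⟨h'.1, h'.2.2⟩⟩

theorem lengthCount_eq_sum_of_unique_factorization [Finite α] {P Q R : List α → Prop}
    (hR : ∀ l, R l ↔ ∃ a b, P a ∧ Q b ∧ a ++ b = l)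
    (huniq : ∀ a b a' b', P a → Q b → P a' → Q b' → a ++ b = a' ++ b' → a = a')
    (n : ℕ) :
    lengthCount R n = ∑ p ∈ antidiagonal n, lengthCount P p.1 * lengthCount Q p.2 := by
  let f : (Σ p : antidiagonal n, {a : List α // a.length = p.1.1 ∧ P a} ×
      {b : List α // b.length = p.1.2 ∧ Q b}) → {l : List α // l.length = n ∧ R l} :=
    fun x => ⟨x.2.1.1 ++ x.2.2.1, by simp [x.2.1.2.1, x.2.2.2.1, mem_antidiagonal.1 x.1.2],
      (hR _).2 ⟨_, _, x.2.1.2.2, x.2.2.2.2, rfl⟩⟩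
  have hf : f.Bijective := by
    constructor
    · rintro ⟨⟨p, _⟩, ⟨a, ha, hPa⟩, ⟨b, hb, hQb⟩⟩ ⟨⟨p', _⟩, ⟨a', ha', hPa'⟩, ⟨b', hb', hQb'⟩⟩ h
      have hab : a ++ b = a' ++ b' := congrArg Subtype.val h
      obtain rfl := huniq a b a' b' hPa hQb hPa' hQb' hab
      obtain rfl := List.append_cancel_left hab
      obtain rfl : p = p' := Prod.ext (ha.symm.trans ha') (hb.symm.trans hb')
      rfl
    · rintro ⟨l, hl, hRl⟩
      obtain ⟨a, b, hPa, hQb, rfl⟩ := (hR l).1 hRl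
      exact ⟨⟨⟨(a.length, b.length), mem_antidiagonal.2 (by simpa using hl)⟩,
        ⟨a, rfl, hPa⟩, ⟨b, rfl, hQb⟩⟩, rfl⟩
  rw [lengthCount, ← Nat.card_eq_of_bijective f hf, Nat.card_sigma,
    ← sum_coe_sort (antidiagonal n)]
  simp only [Nat.card_prod, lengthCount]

theorem lengthSeries_eq_mul_of_unique_factorization [Finite α] {P Q R : List α → Prop}
    (hR : ∀ l, R l ↔ ∃ a b, P a ∧ Q b ∧ a ++ b = l)
    (huniq : ∀ a b a' b', P a → Q b → P a' → Q b' → a ++ b = a' ++ b' → a = a') :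
    lengthSeries R = lengthSeries P * lengthSeries Q := by
  ext n
  simp [lengthSeries, coeff_mul, lengthCount_eq_sum_of_unique_factorization hR huniq n]

end LengthSeries

theorem PowerSeries.eq_of_sq_eq_sq {R : Type*} [CommRing R] [NoZeroDivisors R]
    [IsAddTorsionFree R] {a b : R⟦X⟧} (h : a ^ 2 = b ^ 2) (h₀ : constantCoeff a = constantCoeff b)
    (hb : constantCoeff b ≠ 0) : a = b := by
  refine (sq_eq_sq_iff_eq_or_eq_neg.1 h).resolve_right fun hab => hb ?_
  rw [hab, map_neg] at h₀
  exact neg_eq_self.1 h₀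

namespace XShift

variable {M : ℕ}

instance : Finite (Letter1 M) :=
  Finite.of_injective (β := Bool ⊕ Bool × Fin M)
    (fun a => match a with
      | .lam => .inl false
      | .xi => .inl true
      | .rho i => .inr (false, i)
      | .eta i => .inr (true, i))
    (by rintro (_ | _ | _ | _) (_ | _ | _ | _) h <;> simp_all)

namespace Letter1

def left : Bool → Letter1 M
  | false => lam
  | true => xi

def right : Bool → Fin M → Letter1 M
  | false, i => rho i
  | true, i => eta i

theorem left_injective : Function.Injective (left (M := M)) := by
  rintro (_ | _) (_ | _) h <;> first | rfl | cases h

theorem right_injective (c : Bool) : Function.Injective (right (M := M) c) := by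
  cases c <;> intro i j h <;> cases h <;> rfl

end Letter1

open Letter1

/-- The stack holds the pending left letters, top first (`false` for `λ`, `true` for `ξ`).
Unlike `red1`, a right letter meeting the empty stack fails, so `runStack w [] = some l` only
describes words whose reduction contains no right letters. -/
def runStack : List (Letter1 M) → List Bool → Option (List Bool)
  | [], l => some l
  | lam :: t, l => runStack t (false :: l)
  | xi :: t, l => runStack t (true :: l)
  | rho _ :: t, false :: l => runStack t l
  | eta _ :: t, true :: l => runStack t l
  | _ :: _, _ => none

@[simp] theorem runStack_left (c : Bool) (t : List (Letter1 M)) (l : List Bool) :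
    runStack (left c :: t) l = runStack t (c :: l) := by
  cases c <;> rfl

@[simp] theorem runStack_right (c : Bool) (i : Fin M) (t : List (Letter1 M)) (l : List Bool) :
    runStack (right c i :: t) (c :: l) = runStack t l := by
  cases c <;> rfl

theorem runStack_append (u v : List (Letter1 M)) (l : List Bool) :
    runStack (u ++ v) l = (runStack u l).bind (runStack v) := by
  induction u generalizing l with
  | nil => rfl
  | cons x t ih => cases x <;> rcases l with _ | ⟨_ | _, l⟩ <;> simp [runStack, ih]

theorem runStack_append_stack {u : List (Letter1 M)} {l l' : List Bool}
    (h : runStack u l = some l') (m : List Bool) : runStack u (l ++ m) = some (l' ++ m) := by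
  induction u generalizing l with
  | nil => simp_all [runStack]
  | cons x t ih =>
    cases x <;> rcases l with _ | ⟨_ | _, l⟩ <;> simp only [runStack, reduceCtorEq] at h ⊢ <;>
      exact ih h

@[simp] theorem foldl_step1_none (w : List (Letter1 M)) : w.foldl (step1 M) none = none := by
  induction w with
  | nil => rfl
  | cons x t ih => exact ih

theorem foldl_step1_eq_some_nil_iff (w : List (Letter1 M)) (r : List (Bool × Fin M))
    (l l' : List Bool) :
    w.foldl (step1 M) (some (r, l)) = some ([], l') ↔ r = [] ∧ runStack w l = some l' := by
  induction w generalizing r l with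
  | nil => simp [runStack, and_comm, eq_comm]
  | cons x t ih =>
    cases x <;> rcases l with _ | ⟨_ | _, l⟩ <;> simp [runStack, step1, ih]

def Balanced (M : ℕ) (w : List (Letter1 M)) : Prop := runStack w [] = some []

theorem red1_eq_one1_iff {w : List (Letter1 M)} : red1 M w = one1 M ↔ Balanced M w :=
  (foldl_step1_eq_some_nil_iff w [] [] []).trans (and_iff_right rfl)

theorem Balanced.append {u v : List (Letter1 M)} (hu : Balanced M u) (hv : Balanced M v) :
    Balanced M (u ++ v) := by
  rw [Balanced, runStack_append, hu]
  exact hv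

theorem Balanced.runStack_eq {u : List (Letter1 M)} (hu : Balanced M u) (l : List Bool) :
    runStack u l = some l :=
  runStack_append_stack hu l

theorem runStack_singleton_ne_some_nil {p r : List (Letter1 M)} (h : Balanced M (p ++ r))
    (c : Bool) : runStack p [c] ≠ some [] := by
  rw [Balanced, runStack_append] at h
  obtain ⟨l₀, hl₀, -⟩ := Option.bind_eq_some_iff.1 h
  have h' := runStack_append_stack hl₀ [c]
  rw [List.nil_append] at h'
  simp [h']

theorem exists_eq_append_right_of_runStack {t : List (Letter1 M)} {l s : List Bool} {c : Bool}
    (h : runStack t (l ++ c :: s) = some []) :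
    ∃ u i v, t = u ++ right c i :: v ∧ runStack u l = some [] ∧ runStack v s = some [] := by
  induction t generalizing l with
  | nil => simp [runStack] at h
  | cons x t ih =>
    cases x with
    | lam =>
      obtain ⟨u, i, v, rfl, hu, hv⟩ := ih (l := false :: l) h
      exact ⟨lam :: u, i, v, rfl, hu, hv⟩
    | xi =>
      obtain ⟨u, i, v, rfl, hu, hv⟩ := ih (l := true :: l) h
      exact ⟨xi :: u, i, v, rfl, hu, hv⟩
    | rho j =>
      rcases l with _ | ⟨_ | _, l⟩
      · cases c
        · exact ⟨[], j, t, rfl, rfl, h⟩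
        · simp [runStack] at h
      · obtain ⟨u, i, v, rfl, hu, hv⟩ := ih (l := l) h
        exact ⟨rho j :: u, i, v, rfl, hu, hv⟩
      · simp [runStack] at h
    | eta j =>
      rcases l with _ | ⟨_ | _, l⟩
      · cases c
        · simp [runStack] at h
        · exact ⟨[], j, t, rfl, rfl, h⟩
      · simp [runStack] at h
      · obtain ⟨u, i, v, rfl, hu, hv⟩ := ih (l := l) h
        exact ⟨eta j :: u, i, v, rfl, hu, hv⟩

theorem codeE1_iff {w : List (Letter1 M)} :
    codeE1 M w ↔ ∃ c i u, w = left c :: (u ++ [right c i]) ∧ Balanced M u := by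
  simp only [codeE1, red1_eq_one1_iff]
  constructor
  · rintro ⟨i, u, h | h, hu⟩
    exacts [⟨false, i, u, h, hu⟩, ⟨true, i, u, h, hu⟩]
  · rintro ⟨(_ | _), i, u, h, hu⟩
    exacts [⟨i, u, .inl h, hu⟩, ⟨i, u, .inr h, hu⟩]

theorem codeE1.balanced {w : List (Letter1 M)} (hw : codeE1 M w) : Balanced M w := by
  obtain ⟨c, i, u, rfl, hu⟩ := codeE1_iff.1 hw
  simp [Balanced, runStack_append, hu.runStack_eq, runStack]

theorem codeE1.ne_nil {w : List (Letter1 M)} (hw : codeE1 M w) : w ≠ [] := by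
  obtain ⟨c, i, u, rfl, -⟩ := codeE1_iff.1 hw
  exact List.cons_ne_nil _ _

theorem codeE1.eq_nil_of_append {p q : List (Letter1 M)} (hw : codeE1 M (p ++ q))
    (hp : Balanced M p) (hp₀ : p ≠ []) : q = [] := by
  obtain ⟨c, i, u, hpq, hu⟩ := codeE1_iff.1 hw
  obtain ⟨x, p, rfl⟩ := List.exists_cons_of_ne_nil hp₀
  rw [List.cons_append, List.cons.injEq] at hpq
  obtain ⟨rfl, hpq⟩ := hpq
  by_contra hq
  rw [← List.dropLast_append_getLast hq, ← List.append_assoc] at hpq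
  obtain ⟨rfl, -⟩ := List.append_inj' hpq rfl
  exact runStack_singleton_ne_some_nil hu c (by simpa [Balanced] using hp)

theorem balanced_ne_nil_iff {l : List (Letter1 M)} :
    l ≠ [] ∧ Balanced M l ↔ ∃ a b, codeE1 M a ∧ Balanced M b ∧ a ++ b = l := by
  constructor
  · rintro ⟨hl, hb⟩
    obtain ⟨x, t, rfl⟩ := List.exists_cons_of_ne_nil hl
    obtain ⟨c, rfl, ht⟩ : ∃ c, x = left c ∧ runStack t [c] = some [] := by
      cases x
      exacts [⟨false, rfl, hb⟩, ⟨true, rfl, hb⟩, by simp [Balanced, runStack] at hb,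
        by simp [Balanced, runStack] at hb]
    obtain ⟨u, i, v, rfl, hu, hv⟩ := exists_eq_append_right_of_runStack (l := []) ht
    exact ⟨left c :: (u ++ [right c i]), v, codeE1_iff.2 ⟨c, i, u, rfl, hu⟩, hv, by simp⟩
  · rintro ⟨a, b, ha, hb, rfl⟩
    exact ⟨by simp [ha.ne_nil], ha.balanced.append hb⟩

theorem codeE1.eq_of_append_eq_append {a b a' b' : List (Letter1 M)} (ha : codeE1 M a)
    (ha' : codeE1 M a') (h : a ++ b = a' ++ b') : a = a' := by
  rcases List.append_eq_append_iff.1 h with ⟨q, rfl, -⟩ | ⟨q, rfl, -⟩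
  · rw [ha'.eq_nil_of_append ha.balanced ha.ne_nil, List.append_nil]
  · rw [ha.eq_nil_of_append ha'.balanced ha'.ne_nil, List.append_nil]

theorem lengthSeries_balanced :
    lengthSeries (Balanced M) = 1 + lengthSeries (codeE1 M) * lengthSeries (Balanced M) := by
  conv_lhs => rw [lengthSeries_eq_one_add (P := Balanced M) rfl]
  rw [lengthSeries_eq_mul_of_unique_factorization (fun _ => balanced_ne_nil_iff)
      fun _ _ _ _ ha _ ha' _ h => ha.eq_of_append_eq_append ha' h]

theorem lengthCount_codeE1_add_two (n : ℕ) :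
    lengthCount (codeE1 M) (n + 2) = 2 * M * lengthCount (Balanced M) n := by
  let f : (Bool × Fin M) × {u : List (Letter1 M) // u.length = n ∧ Balanced M u} →
      {w : List (Letter1 M) // w.length = n + 2 ∧ codeE1 M w} :=
    fun x => ⟨left x.1.1 :: (x.2.1 ++ [right x.1.1 x.1.2]), by simp [x.2.2.1],
      codeE1_iff.2 ⟨_, _, _, rfl, x.2.2.2⟩⟩
  have hf : f.Bijective := by
    constructor
    · rintro ⟨⟨c, i⟩, u, hu⟩ ⟨⟨c', i'⟩, u', hu'⟩ h
      simp only [f, Subtype.mk.injEq, List.cons.injEq] at h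
      obtain ⟨hc, h⟩ := h
      obtain rfl := left_injective hc
      obtain ⟨rfl, hi⟩ := List.append_inj' h rfl
      obtain rfl := right_injective c (List.singleton_inj.1 hi)
      rfl
    · rintro ⟨w, hw, hcode⟩
      obtain ⟨c, i, u, rfl, hu⟩ := codeE1_iff.1 hcode
      exact ⟨⟨⟨c, i⟩, u, by simpa using hw, hu⟩, rfl⟩
  rw [lengthCount, ← Nat.card_eq_of_bijective f hf, Nat.card_prod, lengthCount]
  simp

theorem lengthCount_codeE1_of_lt_two {n : ℕ} (hn : n < 2) : lengthCount (codeE1 M) n = 0 := by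
  have : IsEmpty {w : List (Letter1 M) // w.length = n ∧ codeE1 M w} :=
    ⟨fun ⟨w, hw, hcode⟩ => by
      obtain ⟨c, i, u, rfl, -⟩ := codeE1_iff.1 hcode
      simp only [List.length_cons, List.length_append] at hw
      omega⟩
  exact Nat.card_of_isEmpty

theorem lengthSeries_codeE1 :
    lengthSeries (codeE1 M) = C (2 * M : ℚ) * (X ^ 2 * lengthSeries (Balanced M)) := by
  ext n
  rw [coeff_C_mul, coeff_X_pow_mul']
  rcases lt_or_ge n 2 with hn | hn
  · simp [lengthSeries, lengthCount_codeE1_of_lt_two hn, not_le.2 hn]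
  · obtain ⟨m, rfl⟩ := Nat.exists_eq_add_of_le' hn
    simp [lengthSeries, lengthCount_codeE1_add_two]

theorem fE1_eq_lengthSeries (M : ℕ) : fE1 M = lengthSeries (codeE1 M) := by
  ext n
  simp [fE1, lengthSeries, e1, card_fin_fun_eq_lengthCount]

theorem fE1_mul_one_sub (M : ℕ) : fE1 M * (1 - fE1 M) = C (2 * M : ℚ) * X ^ 2 := by
  rw [fE1_eq_lengthSeries]
  have hB : (1 - lengthSeries (codeE1 M)) * lengthSeries (Balanced M) = 1 := by
    linear_combination lengthSeries_balanced (M := M)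
  linear_combination C (2 * M : ℚ) * X ^ 2 * hB +
    (1 - lengthSeries (codeE1 M)) * lengthSeries_codeE1 (M := M)

theorem constantCoeff_fE1 (M : ℕ) : constantCoeff (fE1 M) = 0 := by
  simp [fE1_eq_lengthSeries, lengthSeries_codeE1]

end XShift

open XShift in
theorem xshift_code_generating_function_general (M : ℕ)
    (s : PowerSeries ℚ) (hs0 : PowerSeries.constantCoeff (R := ℚ) s = 1)
    (hs : s ^ 2 = 1 - 8 * (M : PowerSeries ℚ) * PowerSeries.X ^ 2) :
    fE1 M = PowerSeries.C (R := ℚ) (1 / 2) * (1 - s) := by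
  have hC : C (2 * M : ℚ) = 2 * (M : ℚ⟦X⟧) := by rw [map_mul, map_natCast, map_ofNat]
  have hsq : (1 - 2 * fE1 M) ^ 2 = s ^ 2 := by
    linear_combination -hs - 4 * fE1_mul_one_sub M - 4 * X ^ 2 * hC
  have hroot : 1 - 2 * fE1 M = s :=
    eq_of_sq_eq_sq hsq (by simp [constantCoeff_fE1, hs0]) (by simp [hs0])
  have hhalf : C (1 / 2 : ℚ) * 2 = 1 := by
    rw [← map_ofNat C 2, ← map_mul]; norm_num
  linear_combination -C (1 / 2 : ℚ) * hroot - fE1 M * hhalf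

open XShift in
/-- The generating function of the code `E` of `X(M)` coincides with that of the Dyck
shift `D_{2M}`: `f(E,z) = (1/2)(1 − √(1 − 8Mz²))`. -/
theorem xshift_code_generating_function (M : ℕ) (hM : 1 ≤ M)
    (s : PowerSeries ℚ) (hs0 : PowerSeries.constantCoeff (R := ℚ) s = 1)
    (hs : s ^ 2 = 1 - 8 * (M : PowerSeries ℚ) * PowerSeries.X ^ 2) :
    fE1 M = PowerSeries.C (R := ℚ) (1 / 2) * (1 - s) :=
  xshift_code_generating_function_general M s hs0 hs
end

section
/- In ℚ[[z]], with s = √((1−Nz)^2 − 4Mz^2) (constant term 1) and f = (1/2)(1 − Nz − s), the identity (1 − Nz − f) / ({1 − (M+N)z − f}·{1 − (N+1)z − f}) = 1/(1 − (1+M+N)z) holds. -/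
open PowerSeries

/-!
`f = (1 - Nz - s)/2` is the root with `f(0) = 0` of `f² - (1 - Nz) f + M z² = 0`.
For `u = 1 - Nz - f` this quadratic relation says exactly that
`(u - Mz)(u - z) = u (1 - (1 + M + N) z)`, and both factors on the left are units of `ℚ⟦z⟧`
because `f` has no constant term.
-/

theorem sq_sub_mul_add_eq_zero_of_sq_eq_discrim {R : Type*} [CommRing R] {c p q s : R}
    (hc : 2 * c = 1) (hs : s ^ 2 = p ^ 2 - 4 * q) :
    (c * (p - s)) ^ 2 - p * (c * (p - s)) + q = 0 := by
  linear_combination c ^ 2 * hs + (c * p * (p - s) - q * (2 * c + 1)) * hc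

theorem mul_one_sub_eq_mul_of_sq_sub_mul_add_eq_zero {R : Type*} [CommRing R] {f m n z : R}
    (hf : f ^ 2 - (1 - n * z) * f + m * z ^ 2 = 0) :
    (1 - n * z - f) * (1 - (1 + m + n) * z) = (1 - (m + n) * z - f) * (1 - (n + 1) * z - f) := by
  linear_combination -hf

theorem PowerSeries.mul_inv_eq_inv_of_mul_eq {k : Type*} [Field k] {a b c : k⟦X⟧}
    (hb : constantCoeff b ≠ 0) (hc : constantCoeff c ≠ 0) (h : a * c = b) :
    a * b⁻¹ = c⁻¹ := by
  refine ((PowerSeries.inv_eq_iff_mul_eq_one hc).mpr ?_).symm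
  rw [mul_right_comm, h, PowerSeries.mul_inv_cancel b hb]

theorem motzkin_key_identity_general (M N : ℕ)
    (s : PowerSeries ℚ) (hs0 : PowerSeries.constantCoeff s = 1)
    (hs : s ^ 2 = (1 - (N : PowerSeries ℚ) * PowerSeries.X) ^ 2
      - 4 * (M : PowerSeries ℚ) * PowerSeries.X ^ 2) :
    (1 - (N : PowerSeries ℚ) * PowerSeries.X
        - PowerSeries.C (1 / 2 : ℚ) * (1 - (N : PowerSeries ℚ) * PowerSeries.X - s))
      * (((1 - ((M + N : ℕ) : PowerSeries ℚ) * PowerSeries.X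
            - PowerSeries.C (1 / 2 : ℚ) * (1 - (N : PowerSeries ℚ) * PowerSeries.X - s))
          * (1 - ((N + 1 : ℕ) : PowerSeries ℚ) * PowerSeries.X
            - PowerSeries.C (1 / 2 : ℚ) * (1 - (N : PowerSeries ℚ) * PowerSeries.X - s)))⁻¹)
      = (1 - ((1 + M + N : ℕ) : PowerSeries ℚ) * PowerSeries.X)⁻¹ := by
  have two_mul_half : 2 * PowerSeries.C (1 / 2 : ℚ) = 1 := by
    rw [← map_ofNat (PowerSeries.C (R := ℚ)) 2, ← map_mul]
    norm_num
  have hf := sq_sub_mul_add_eq_zero_of_sq_eq_discrim two_mul_half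
    (hs.trans (by ring : _ = (1 - (N : ℚ⟦X⟧) * X) ^ 2 - 4 * ((M : ℚ⟦X⟧) * X ^ 2)))
  refine PowerSeries.mul_inv_eq_inv_of_mul_eq (by simp [hs0]) (by simp) ?_
  push_cast
  exact mul_one_sub_eq_mul_of_sq_sub_mul_add_eq_zero (by linear_combination hf)

/-- In `ℚ[[z]]`, with `s = √((1−Nz)² − 4Mz²)` (constant term `1`) and
`f = (1/2)(1 − Nz − s)`, one has
`(1 − Nz − f)/({1 − (M+N)z − f}·{1 − (N+1)z − f}) = 1/(1 − (1+M+N)z)`. -/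
theorem motzkin_key_identity (M N : ℕ) (hM : 1 ≤ M) (hN : 1 ≤ N)
    (s : PowerSeries ℚ) (hs0 : PowerSeries.constantCoeff s = 1)
    (hs : s ^ 2 = (1 - (N : PowerSeries ℚ) * PowerSeries.X) ^ 2
      - 4 * (M : PowerSeries ℚ) * PowerSeries.X ^ 2) :
    (1 - (N : PowerSeries ℚ) * PowerSeries.X
        - PowerSeries.C (1 / 2 : ℚ) * (1 - (N : PowerSeries ℚ) * PowerSeries.X - s))
      * (((1 - ((M + N : ℕ) : PowerSeries ℚ) * PowerSeries.X
            - PowerSeries.C (1 / 2 : ℚ) * (1 - (N : PowerSeries ℚ) * PowerSeries.X - s))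
          * (1 - ((N + 1 : ℕ) : PowerSeries ℚ) * PowerSeries.X
            - PowerSeries.C (1 / 2 : ℚ) * (1 - (N : PowerSeries ℚ) * PowerSeries.X - s)))⁻¹)
      = (1 - ((1 + M + N : ℕ) : PowerSeries ℚ) * PowerSeries.X)⁻¹ :=
  motzkin_key_identity_general M N s hs0 hs
end
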